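/- arXiv:1712.07356 — 6 statements merged into one kernel-verified Lean document; each statement's English description precedes it below -/
import Mathlib

section
/- With T the crossing-time map defined implicitly by X(T(x,y), x, y) = -x for the flow of ẋ = f(x,y), ẏ = g(x,y) with f(0,0) ≠ 0, one has ∂T/∂y (0,0) = 0. -/
/-!
On the line `x = 0` the defining equation reads `X (T (0, y)) 0 y = 0 = X 0 0 y`. Since `∂ₜX = f`
and `f (0, 0) ≠ 0`, the map `t ↦ X t 0 y` is injective (Rolle) on every time interval along which
the trajectory from `(0, y)` stays in the region `f ≠ 0`. A speed bound near the origin keeps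
trajectories from points close to the origin in that region for a uniform time, and `T (0, y)` is
small by continuity, so `T (0, y) = 0` for all small `y`.
-/

open Set Metric Filter Topology

section Escape

variable {E : Type*} [NormedAddCommGroup E] [NormedSpace ℝ E]

theorem norm_sub_le_mul_of_norm_deriv_lt {γ γ' : ℝ → E} {R K t : ℝ}
    (hγ : ∀ s, HasDerivAt γ (γ' s) s) (hbound : ∀ s, ‖γ s - γ 0‖ < R → ‖γ' s‖ < K)
    (hK : 0 ≤ K) (ht : 0 ≤ t) (hKt : K * t < R) :
    ‖γ t - γ 0‖ ≤ K * t := by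
  have hγc : Continuous γ := continuous_iff_continuousAt.2 fun s => (hγ s).continuousAt
  refine image_norm_le_of_norm_deriv_right_lt_deriv_boundary (f := fun s => γ s - γ 0)
    (hγc.sub continuous_const).continuousOn
    (fun s _ => ((hγ s).sub_const (γ 0)).hasDerivWithinAt) (by simp)
    (fun s => (hasDerivAt_id s).const_mul K |>.congr_deriv (mul_one K)) ?_ ⟨ht, le_rfl⟩
  intro s hs hs_eq
  exact hbound s (hs_eq.trans_lt ((mul_le_mul_of_nonneg_left hs.2.le hK).trans_lt hKt))

theorem norm_sub_le_mul_abs_of_norm_deriv_lt {γ γ' : ℝ → E} {R K t : ℝ}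
    (hγ : ∀ s, HasDerivAt γ (γ' s) s) (hbound : ∀ s, ‖γ s - γ 0‖ < R → ‖γ' s‖ < K)
    (hK : 0 ≤ K) (hKt : K * |t| < R) :
    ‖γ t - γ 0‖ ≤ K * |t| := by
  rcases le_total 0 t with ht | ht
  · rw [abs_of_nonneg ht] at hKt ⊢
    exact norm_sub_le_mul_of_norm_deriv_lt hγ hbound hK ht hKt
  · rw [abs_of_nonpos ht] at hKt ⊢
    have hγneg : ∀ s, HasDerivAt (fun s => γ (-s)) (-γ' (-s)) s := fun s => by
      simpa [Function.comp_def] using (hγ (-s)).scomp s (hasDerivAt_neg s)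
    simpa using norm_sub_le_mul_of_norm_deriv_lt (γ := fun s => γ (-s)) hγneg
      (fun s hs => by simpa using hbound (-s) (by simpa using hs)) hK (neg_nonneg.2 ht) hKt

theorem ContinuousAt.exists_pos_forall_solution_mem {F : E → E} {p₀ : E} (hF : ContinuousAt F p₀)
    {s : Set E} (hs : s ∈ 𝓝 p₀) :
    ∃ δ > 0, ∀ γ : ℝ → E, (∀ t, HasDerivAt γ (F (γ t)) t) → dist (γ 0) p₀ < δ →
      ∀ t, |t| < δ → γ t ∈ s := by
  set K := ‖F p₀‖ + 1
  have hK : 0 < K := by positivity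
  have hslow : ∀ᶠ p in 𝓝 p₀, ‖F p‖ < K ∧ p ∈ s :=
    (hF.norm.eventually (gt_mem_nhds (lt_add_one _))).and hs
  obtain ⟨ε, hε, hball⟩ := eventually_nhds_iff_ball.1 hslow
  refine ⟨min (ε / 2) (ε / (2 * K)), by positivity, fun γ hγ hγ0 t ht => ?_⟩
  have hKt : K * |t| < ε / 2 := by
    calc K * |t| < K * (ε / (2 * K)) := by gcongr; exact ht.trans_le (min_le_right _ _)
      _ = ε / 2 := by field_simp
  have hγ0' : dist (γ 0) p₀ < ε / 2 := hγ0.trans_le (min_le_left _ _)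
  have hnear : ∀ τ, ‖γ τ - γ 0‖ < ε / 2 → γ τ ∈ ball p₀ ε := fun τ hτ => by
    rw [mem_ball, ← dist_eq_norm] at *
    linarith [dist_triangle (γ τ) (γ 0) p₀]
  have hmove := norm_sub_le_mul_abs_of_norm_deriv_lt hγ (fun τ hτ => (hball _ (hnear τ hτ)).1)
    hK.le hKt
  exact (hball _ (hnear t (hmove.trans_lt hKt))).2

end Escape

theorem eq_of_apply_eq_of_hasDerivAt_ne_zero {u u' : ℝ → ℝ} {a b : ℝ}
    (hu : ∀ t, HasDerivAt u (u' t) t) (hne : ∀ t ∈ uIcc a b, u' t ≠ 0) (hab : u a = u b) :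
    a = b := by
  have hrolle : ∀ {c d}, c < d → u c = u d → ∃ t ∈ Ioo c d, u' t = 0 := fun hcd hu_eq =>
    exists_hasDerivAt_eq_zero hcd
      (continuous_iff_continuousAt.2 fun t => (hu t).continuousAt).continuousOn hu_eq
      fun t _ => hu t
  by_contra h
  rcases lt_or_gt_of_ne h with h | h
  · obtain ⟨t, ht, ht0⟩ := hrolle h hab
    exact hne t (Ioo_subset_Icc_self.trans Icc_subset_uIcc ht) ht0
  · obtain ⟨t, ht, ht0⟩ := hrolle h hab.symm
    exact hne t (Ioo_subset_Icc_self.trans Icc_subset_uIcc' ht) ht0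

theorem crossing_time_deriv_y
    (f g : ℝ × ℝ → ℝ) (hf : ContDiff ℝ 2 f) (hg : ContDiff ℝ 2 g)
    (hf0 : f (0, 0) ≠ 0)
    (X Y : ℝ → ℝ → ℝ → ℝ)
    (hX0 : ∀ x y, X 0 x y = x) (hY0 : ∀ x y, Y 0 x y = y)
    (hXflow : ∀ t x y, HasDerivAt (fun s => X s x y) (f (X t x y, Y t x y)) t)
    (hYflow : ∀ t x y, HasDerivAt (fun s => Y s x y) (g (X t x y, Y t x y)) t)
    (T : ℝ × ℝ → ℝ) (hT0 : T (0, 0) = 0)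
    (hT : ∃ U ∈ nhds ((0, 0) : ℝ × ℝ),
      ContDiffOn ℝ 1 T U ∧ ∀ p ∈ U, X (T p) p.1 p.2 = -p.1) :
    deriv (fun y => T (0, y)) 0 = 0 := by
  obtain ⟨U, hU, hTc, hXT⟩ := hT
  have hF : ContinuousAt (fun p => (f p, g p)) (0, 0) :=
    (hf.continuous.prodMk hg.continuous).continuousAt
  obtain ⟨δ, hδ, hstay⟩ :=
    hF.exists_pos_forall_solution_mem (hf.continuous.continuousAt.eventually_ne hf0)
  have hsol : ∀ y t, HasDerivAt (fun s => (X s 0 y, Y s 0 y)) (f (X t 0 y, Y t 0 y),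
      g (X t 0 y, Y t 0 y)) t := fun y t => (hXflow t 0 y).prodMk (hYflow t 0 y)
  have hline : Continuous fun y : ℝ => ((0 : ℝ), y) := continuous_const.prodMk continuous_id
  have hTy : Tendsto (fun y => T (0, y)) (𝓝 0) (𝓝 0) := by
    simpa [hT0, Function.comp_def] using
      ((hTc.continuousOn.continuousAt hU).comp hline.continuousAt).tendsto
  have hzero : (fun y => T (0, y)) =ᶠ[𝓝 0] fun _ => 0 := by
    filter_upwards [hTy (ball_mem_nhds 0 hδ), ball_mem_nhds 0 hδ,
      hline.continuousAt.preimage_mem_nhds hU] with y hTδ hyδ hyU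
    have hcross : X (T (0, y)) 0 y = 0 := by simpa using hXT _ hyU
    refine (eq_of_apply_eq_of_hasDerivAt_ne_zero (fun t => hXflow t 0 y) (fun t ht => ?_)
      ((hX0 0 y).trans hcross.symm)).symm
    refine hstay _ (hsol y) ?_ t ?_
    · simpa [hX0, hY0, Prod.dist_eq] using hyδ
    · simpa using (abs_sub_left_of_mem_uIcc ht).trans_lt (by simpa using hTδ)
  rw [hzero.deriv_eq, deriv_const]
end

section
/- With T the crossing-time map defined implicitly by X(T(x,y), x, y) = -x for the flow of a C^3 planar vector field (f,g) with f(0,0) ≠ 0, the second derivative satisfies ∂²T/∂y² (0,0) = 0. -/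
/-!
On the line `x = 0` the crossing condition reads `X (T (0, y)) 0 y = 0 = X 0 0 y`. Near the
origin `f` does not vanish and the field is bounded, so every trajectory starting near the origin
stays there for a uniform short time, during which its first coordinate is injective in time
(Rolle). Since `T` is continuous with `T (0, 0) = 0`, this forces `T (0, y) = 0` for all small
`y`, so every derivative of `y ↦ T (0, y)` vanishes at `0`.
-/

open Set Filter Topology

theorem norm_image_sub_le_two_mul_of_local_deriv_bound {E : Type*} [NormedAddCommGroup E]
    [NormedSpace ℝ E] {p d : ℝ → E} {M R t : ℝ} (hp : ∀ s, HasDerivAt p (d s) s)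
    (hd : ∀ s, ‖p s - p 0‖ ≤ R → ‖d s‖ ≤ M) (hM : 0 < M) (ht : 0 ≤ t) (htR : 2 * M * t ≤ R) :
    ‖p t - p 0‖ ≤ 2 * M * t := by
  -- the fence `2 * M * s` is strictly steeper than the path wherever the path touches it
  have hfence := image_norm_le_of_norm_deriv_right_lt_deriv_boundary (a := 0) (b := t)
    (f := fun s => p s - p 0) (B := fun s => 2 * M * s) (B' := fun _ => 2 * M)
    (fun s _ => ((hp s).continuousAt.sub continuousAt_const).continuousWithinAt)
    (fun s _ => ((hp s).sub_const (p 0)).hasDerivWithinAt) (by simp)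
    (fun s => by simpa using (hasDerivAt_id s).const_mul (2 * M))
    (fun s hs heq => by
      have hsR : ‖p s - p 0‖ ≤ R := by
        rw [heq]; nlinarith [hs.1, hs.2.le]
      linarith [hd s hsR])
  exact hfence ⟨ht, le_rfl⟩

theorem norm_image_sub_le_of_local_deriv_bound {E : Type*} [NormedAddCommGroup E]
    [NormedSpace ℝ E] {p d : ℝ → E} {M R t : ℝ} (hp : ∀ s, HasDerivAt p (d s) s)
    (hd : ∀ s, ‖p s - p 0‖ ≤ R → ‖d s‖ ≤ M) (hM : 0 < M) (htR : 2 * M * |t| ≤ R) :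
    ‖p t - p 0‖ ≤ R := by
  rcases le_total 0 t with ht | ht
  · rw [abs_of_nonneg ht] at htR
    exact (norm_image_sub_le_two_mul_of_local_deriv_bound hp hd hM ht htR).trans htR
  · rw [abs_of_nonpos ht] at htR
    have hrev : ∀ s, HasDerivAt (fun s => p (-s)) (-d (-s)) s := fun s => by
      simpa [Function.comp_def] using (hp (-s)).scomp s (hasDerivAt_neg s)
    have := norm_image_sub_le_two_mul_of_local_deriv_bound (p := fun s => p (-s)) hrev
      (fun s hs => by simpa using hd (-s) (by simpa using hs)) hM (neg_nonneg.2 ht) htR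
    simpa using this.trans htR

theorem eq_of_hasDerivAt_ne_zero_uIcc {φ φ' : ℝ → ℝ} {a b : ℝ}
    (hφ : ∀ s ∈ uIcc a b, HasDerivAt φ (φ' s) s) (hφ' : ∀ s ∈ uIcc a b, φ' s ≠ 0)
    (hab : φ a = φ b) : a = b := by
  wlog hle : a ≤ b generalizing a b
  · rw [uIcc_comm] at hφ hφ'
    exact (this hφ hφ' hab.symm (le_of_not_ge hle)).symm
  rcases hle.eq_or_lt with rfl | hlt
  · rfl
  rw [uIcc_of_le hle] at hφ hφ'
  obtain ⟨c, hc, hc0⟩ := exists_hasDerivAt_eq_zero hlt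
    (fun s hs => (hφ s hs).continuousAt.continuousWithinAt) hab
    (fun s hs => hφ s (Ioo_subset_Icc_self hs))
  exact absurd hc0 (hφ' c (Ioo_subset_Icc_self hc))

theorem eventually_flow_fst_eq_imp_eq_zero {f g : ℝ × ℝ → ℝ} {X Y : ℝ → ℝ → ℝ → ℝ}
    (hf : Continuous f) (hg : Continuous g)
    (hf0 : f 0 ≠ 0) (hX0 : ∀ x y, X 0 x y = x) (hY0 : ∀ x y, Y 0 x y = y)
    (hXflow : ∀ t x y, HasDerivAt (fun s => X s x y) (f (X t x y, Y t x y)) t)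
    (hYflow : ∀ t x y, HasDerivAt (fun s => Y s x y) (g (X t x y, Y t x y)) t) :
    ∀ᶠ p : ℝ × ℝ × ℝ in 𝓝 0, X p.1 p.2.1 p.2.2 = p.2.1 → p.1 = 0 := by
  obtain ⟨r, hr, hfr⟩ := Metric.nhds_basis_closedBall.mem_iff.1
    (hf.continuousAt.eventually_ne hf0)
  obtain ⟨C, hC⟩ := (isCompact_closedBall (0 : ℝ × ℝ) r).exists_bound_of_continuousOn
    (hf.prodMk hg).continuousOn
  set M := max C 1
  have hM : 0 < M := lt_max_of_lt_right one_pos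
  have hδ : 0 < min (r / (4 * M)) (r / 2) := by positivity
  filter_upwards [Metric.closedBall_mem_nhds 0 hδ] with ⟨t, q⟩ htq hX
  rw [mem_closedBall_zero_iff, Prod.norm_def, max_le_iff, le_min_iff, le_min_iff] at htq
  have ht : 2 * M * |t| ≤ r / 2 := by
    rw [← Real.norm_eq_abs]
    calc 2 * M * ‖t‖ ≤ 2 * M * (r / (4 * M)) := by gcongr; exact htq.1.1
      _ = r / 2 := by field_simp; ring
  set path : ℝ → ℝ × ℝ := fun s => (X s q.1 q.2, Y s q.1 q.2)
  have hpath0 : path 0 = q := by simp [path, hX0, hY0]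
  have hpath : ∀ s, HasDerivAt path (f (path s), g (path s)) s :=
    fun s => (hXflow s q.1 q.2).prodMk (hYflow s q.1 q.2)
  have hmem : ∀ s, ‖path s - path 0‖ ≤ r / 2 → path s ∈ Metric.closedBall 0 r := fun s hs => by
    rw [hpath0] at hs
    rw [mem_closedBall_zero_iff]
    linarith [norm_sub_norm_le (path s) q, htq.2.2]
  have hstay : ∀ s ∈ uIcc t 0, path s ∈ Metric.closedBall 0 r := by
    intro s hs
    have hs_small : 2 * M * |s| ≤ r / 2 := by
      have := abs_sub_right_of_mem_uIcc hs
      rw [zero_sub, zero_sub, abs_neg, abs_neg] at this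
      exact le_trans (by gcongr) ht
    exact hmem s <| norm_image_sub_le_of_local_deriv_bound hpath
      (fun s' hs' => (hC _ (hmem s' hs')).trans (le_max_left _ _)) hM hs_small
  dsimp only at hX ⊢
  exact eq_of_hasDerivAt_ne_zero_uIcc (fun s _ => hXflow s q.1 q.2)
    (fun s hs => hfr (hstay s hs)) (by simpa [hX0] using hX)

theorem crossing_time_second_deriv_y
    (f g : ℝ × ℝ → ℝ) (hf : ContDiff ℝ 3 f) (hg : ContDiff ℝ 3 g)
    (hf0 : f (0, 0) ≠ 0)
    (X Y : ℝ → ℝ → ℝ → ℝ)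
    (hX0 : ∀ x y, X 0 x y = x) (hY0 : ∀ x y, Y 0 x y = y)
    (hXflow : ∀ t x y, HasDerivAt (fun s => X s x y) (f (X t x y, Y t x y)) t)
    (hYflow : ∀ t x y, HasDerivAt (fun s => Y s x y) (g (X t x y, Y t x y)) t)
    (T : ℝ × ℝ → ℝ) (hT0 : T (0, 0) = 0)
    (hT : ∃ U ∈ nhds ((0, 0) : ℝ × ℝ),
      ContDiffOn ℝ 2 T U ∧ ∀ p ∈ U, X (T p) p.1 p.2 = -p.1) :
    deriv (fun y => deriv (fun y' => T (0, y')) y) 0 = 0 := by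
  obtain ⟨U, hU, hTU, hTX⟩ := hT
  have hline : Tendsto (fun y : ℝ => ((0 : ℝ), y)) (𝓝 0) (𝓝 (0, 0)) :=
    (continuous_const.prodMk continuous_id).tendsto' 0 _ rfl
  have hcurve : Tendsto (fun y : ℝ => (T (0, y), (0 : ℝ), y)) (𝓝 0) (𝓝 0) := by
    have hT : Tendsto (fun y : ℝ => T (0, y)) (𝓝 0) (𝓝 (T (0, 0))) :=
      (hTU.continuousOn.continuousAt hU).tendsto.comp hline
    rw [hT0] at hT
    exact hT.prodMk_nhds hline
  have hT_eq_zero : (fun y => T (0, y)) =ᶠ[𝓝 0] fun _ => 0 := by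
    filter_upwards [hline hU, hcurve (eventually_flow_fst_eq_imp_eq_zero hf.continuous
      hg.continuous hf0 hX0 hY0 hXflow hYflow)] with y hyU hy
    exact hy (by simpa using hTX _ hyU)
  rw [hT_eq_zero.deriv.deriv_eq]
  simp
end

section
/- Define P(x,y) = Y(T(x,y), x, y) as in the transversal crossing setup. Then ∂P/∂x (0,0) = -2 g(0,0) / f(0,0). -/
/-!
Uniformly in the starting point near the origin, a trajectory satisfies
`(X, Y)(t) = (x, y) + t • (f, g)(0, 0) + o(t)`, by a fencing argument.
On the orbit through `(x, 0)` the crossing condition `X(T) = -x` then reads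
`f(0,0) T + 2x = o(T)`, so `T = O(x)` and `T = -2x / f(0,0) + o(x)`; hence
`P(x) = Y(T) = g(0,0) T + o(T) = -2 g(0,0) x / f(0,0) + o(x)`.
-/

open Set Filter Topology Asymptotics

section FlowLinearization

variable {E : Type*} [NormedAddCommGroup E] [NormedSpace ℝ E] {F : E → E} {φ : ℝ → E} {p₀ : E}
  {ε η : ℝ}

/- Fencing argument: as long as `‖φ s - φ 0 - s • F p₀‖` stays below `ε * s`, the trajectory stays
in the `η`-ball around `p₀`, where `F` is `ε`-close to `F p₀`, so the barrier is never reached. -/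
theorem norm_flow_sub_linear_le_of_nonneg (hε : 0 ≤ ε)
    (hF : ∀ q, ‖q - p₀‖ < η → ‖F q - F p₀‖ < ε) (hφ : ∀ s, HasDerivAt φ (F (φ s)) s) {b : ℝ}
    (hb : ‖φ 0 - p₀‖ + b * (ε + ‖F p₀‖) < η) :
    ∀ s ∈ Icc 0 b, ‖φ s - φ 0 - s • F p₀‖ ≤ ε * s := by
  have hderiv : ∀ s, HasDerivAt (fun s => φ s - φ 0 - s • F p₀) (F (φ s) - F p₀) s := fun s =>
    (((hφ s).sub_const (φ 0)).sub ((hasDerivAt_id' s).smul_const (F p₀))).congr_deriv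
      (by rw [one_smul])
  refine image_norm_le_of_norm_deriv_right_lt_deriv_boundary
    (fun s _ => (hderiv s).continuousAt.continuousWithinAt)
    (fun s _ => (hderiv s).hasDerivWithinAt) (by simp)
    (fun s => (hasDerivAt_id s).const_mul ε |>.congr_deriv (mul_one ε)) ?_
  rintro s ⟨hs0, hsb⟩ hs
  apply hF
  calc ‖φ s - p₀‖ = ‖(φ s - φ 0 - s • F p₀) + (φ 0 - p₀) + s • F p₀‖ := by congr 1; abel
    _ ≤ ε * s + ‖φ 0 - p₀‖ + s * ‖F p₀‖ := by
        grw [norm_add_le, norm_add_le, hs, norm_smul, Real.norm_of_nonneg hs0]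
    _ ≤ ‖φ 0 - p₀‖ + b * (ε + ‖F p₀‖) := by nlinarith [norm_nonneg (F p₀)]
    _ < η := hb

theorem norm_flow_sub_linear_le (hε : 0 ≤ ε)
    (hF : ∀ q, ‖q - p₀‖ < η → ‖F q - F p₀‖ < ε) (hφ : ∀ s, HasDerivAt φ (F (φ s)) s) {t : ℝ}
    (ht : ‖φ 0 - p₀‖ + |t| * (ε + ‖F p₀‖) < η) :
    ‖φ t - φ 0 - t • F p₀‖ ≤ ε * |t| := by
  rcases le_total 0 t with h | h
  · rw [abs_of_nonneg h] at ht ⊢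
    exact norm_flow_sub_linear_le_of_nonneg hε hF hφ ht t ⟨h, le_rfl⟩
  · rw [abs_of_nonpos h] at ht ⊢
    have hF' : ∀ q, ‖q - p₀‖ < η → ‖(-F) q - (-F) p₀‖ < ε := fun q hq => by
      rw [Pi.neg_apply, Pi.neg_apply, neg_sub_neg, norm_sub_rev]
      exact hF q hq
    have hφ' : ∀ s, HasDerivAt (fun s => φ (-s)) ((-F) (φ (-s))) s := fun s => by
      simpa [Function.comp_def] using (hφ (-s)).scomp s (hasDerivAt_neg s)
    simpa using
      norm_flow_sub_linear_le_of_nonneg hε hF' hφ' (by simpa using ht) (-t) ⟨by linarith, le_rfl⟩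

theorem isLittleO_flow_sub_linear {ι : Type*} {l : Filter ι} {φ : ι → ℝ → E} {τ : ι → ℝ}
    (hF : ContinuousAt F p₀) (hφ : ∀ i s, HasDerivAt (φ i) (F (φ i s)) s)
    (hφ₀ : Tendsto (fun i => φ i 0) l (𝓝 p₀)) (hτ : Tendsto τ l (𝓝 0)) :
    (fun i => φ i (τ i) - φ i 0 - τ i • F p₀) =o[l] τ := by
  refine isLittleO_iff.2 fun ε hε => ?_
  obtain ⟨η, hη, hFη⟩ := Metric.continuousAt_iff.1 hF ε hε
  have hsmall : Tendsto (fun i => ‖φ i 0 - p₀‖ + |τ i| * (ε + ‖F p₀‖)) l (𝓝 0) := by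
    simpa using (tendsto_iff_norm_sub_tendsto_zero.1 hφ₀).add (hτ.abs.mul_const (ε + ‖F p₀‖))
  filter_upwards [(tendsto_order.1 hsmall).2 η hη] with i hi
  have hFε : ∀ q, ‖q - p₀‖ < η → ‖F q - F p₀‖ < ε := fun q hq => by
    simpa only [dist_eq_norm] using hFη (by simpa only [dist_eq_norm] using hq)
  simpa using norm_flow_sub_linear_le hε.le hFε (hφ i) hi

end FlowLinearization

theorem isLittleO_add_div_mul_of_isLittleO_mul_add {α : Type*} {l : Filter α} {u v w : α → ℝ}
    {a b : ℝ} (ha : a ≠ 0) (hu : (fun i => a * u i + v i) =o[l] u)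
    (hw : (fun i => w i - b * u i) =o[l] u) :
    (fun i => w i + b / a * v i) =o[l] v := by
  have hu_au : (fun i => a * u i + v i) =o[l] fun i => a * u i :=
    hu.trans_isBigO (isBigO_self_const_mul ha u l)
  have huv : u =O[l] v := by
    refine (isBigO_self_const_mul ha u l).trans (isBigO_neg_right.1 ?_)
    exact hu_au.right_isBigO_sub.congr_right fun i => by ring
  refine ((hw.add (hu.const_mul_left (b / a))).congr_left fun i => ?_).trans_isBigO huv
  field_simp
  ring

theorem point_map_deriv_x
    (f g : ℝ × ℝ → ℝ) (hf : ContDiff ℝ 2 f) (hg : ContDiff ℝ 2 g)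
    (hf0 : f (0, 0) ≠ 0)
    (X Y : ℝ → ℝ → ℝ → ℝ)
    (hX0 : ∀ x y, X 0 x y = x) (hY0 : ∀ x y, Y 0 x y = y)
    (hXflow : ∀ t x y, HasDerivAt (fun s => X s x y) (f (X t x y, Y t x y)) t)
    (hYflow : ∀ t x y, HasDerivAt (fun s => Y s x y) (g (X t x y, Y t x y)) t)
    (T : ℝ × ℝ → ℝ) (hT0 : T (0, 0) = 0)
    (hT : ∃ U ∈ nhds ((0, 0) : ℝ × ℝ),
      ContDiffOn ℝ 1 T U ∧ ∀ p ∈ U, X (T p) p.1 p.2 = -p.1) :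
    deriv (fun x => Y (T (x, 0)) x 0) 0 = -2 * g (0, 0) / f (0, 0) := by
  obtain ⟨U, hU, hTU, hcross⟩ := hT
  have hpair : Tendsto (fun x : ℝ => (x, (0 : ℝ))) (𝓝 0) (𝓝 (0, 0)) :=
    (continuous_id.prodMk continuous_const).tendsto 0
  have hτ : Tendsto (fun x : ℝ => T (x, 0)) (𝓝 0) (𝓝 0) := by
    simpa [hT0, Function.comp_def] using (hTU.continuousOn.continuousAt hU).tendsto.comp hpair
  have hflow := isLittleO_flow_sub_linear (F := fun p => (f p, g p))
    (φ := fun x s => (X s x 0, Y s x 0))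
    (hf.continuous.prodMk hg.continuous).continuousAt
    (fun x s => (hXflow s x 0).prodMk (hYflow s x 0)) (by simpa [hX0, hY0] using hpair) hτ
  simp only [hX0, hY0, Prod.smul_mk, Prod.mk_sub_mk, smul_eq_mul] at hflow
  obtain ⟨hX, hY⟩ := isLittleO_prod_left.1 hflow
  have hu : (fun x => f (0, 0) * T (x, 0) + 2 * x) =o[𝓝 0] fun x => T (x, 0) := by
    refine hX.neg_left.congr' ?_ EventuallyEq.rfl
    filter_upwards [hpair hU] with x hx
    rw [hcross _ hx]
    ring
  have hw : (fun x => Y (T (x, 0)) x 0 - g (0, 0) * T (x, 0)) =o[𝓝 0] fun x => T (x, 0) :=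
    hY.congr_left fun x => by ring
  have hP := (isLittleO_add_div_mul_of_isLittleO_mul_add hf0 hu hw).trans_isBigO
    (isBigO_const_mul_self 2 id _)
  refine (hasDerivAt_iff_isLittleO_nhds_zero.2 (hP.congr_left fun x => ?_)).deriv
  simp only [zero_add, hT0, hY0, smul_eq_mul]
  ring
end

section
/- Define P(x,y) = Y(T(x,y), x, y) as in the transversal crossing setup with (f,g) of class C^3. Then ∂²P/∂y² (0,0) = 0. -/
open Set

/-- Escape-time lemma: a planar curve with speed bounded by `M` (as long as it stays in the
`r`-box) starting near the origin stays in the `r`-box for time `r/(8M)`. -/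
lemma stay_in_box (u v F G : ℝ → ℝ) (M r : ℝ) (hM : 0 < M) (hr : 0 < r)
    (hu : ∀ t, HasDerivAt u (F t) t) (hv : ∀ t, HasDerivAt v (G t) t)
    (hF : ∀ t, |u t| ≤ r → |v t| ≤ r → |F t| ≤ M)
    (hG : ∀ t, |u t| ≤ r → |v t| ≤ r → |G t| ≤ M)
    (hu0 : u 0 = 0) (hv0 : |v 0| ≤ r / 4) :
    ∀ t ∈ Set.Icc (0 : ℝ) (r / (8 * M)), |u t| ≤ r ∧ |v t| ≤ r := by
  set δ := r / (8 * M) with hδ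
  have hδpos : 0 < δ := by positivity
  by_contra hcon
  push_neg at hcon
  obtain ⟨t₁, ht₁, hbad₁⟩ := hcon
  set B : Set ℝ := {t ∈ Icc (0 : ℝ) δ | r < |u t| ∨ r < |v t|} with hB
  have hBne : B.Nonempty := by
    refine ⟨t₁, ht₁, ?_⟩
    rcases le_or_gt (|u t₁|) r with h | h
    · exact Or.inr (hbad₁ h)
    · exact Or.inl h
  have hBbd : BddBelow B := ⟨0, fun t ht => ht.1.1⟩
  set t₀ := sInf B with ht₀def
  have ht₀mem : t₀ ∈ Icc (0 : ℝ) δ := by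
    constructor
    · exact le_csInf hBne fun t ht => ht.1.1
    · exact (csInf_le hBbd hBne.choose_spec).trans hBne.choose_spec.1.2
  -- all points strictly before t₀ are good
  have hgood : ∀ s, 0 ≤ s → s < t₀ → |u s| ≤ r ∧ |v s| ≤ r := by
    intro s hs0 hst
    have hsB : s ∉ B := fun h => absurd (csInf_le hBbd h) (not_le.mpr hst)
    have hsI : s ∈ Icc (0 : ℝ) δ := ⟨hs0, le_of_lt (lt_of_lt_of_le hst ht₀mem.2)⟩
    by_contra h
    push_neg at h
    rcases le_or_gt (|u s|) r with h1 | h1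
    · exact hsB ⟨hsI, Or.inr (lt_of_not_ge (fun h2 => (h h1).not_ge h2))⟩
    · exact hsB ⟨hsI, Or.inl h1⟩
  have hucont : Continuous u := by
    refine continuous_iff_continuousAt.mpr fun t => (hu t).differentiableAt.continuousAt
  have hvcont : Continuous v := by
    refine continuous_iff_continuousAt.mpr fun t => (hv t).differentiableAt.continuousAt
  -- the endpoint t₀ is good too, by continuity
  have ht₀good : |u t₀| ≤ r ∧ |v t₀| ≤ r := by
    rcases eq_or_lt_of_le ht₀mem.1 with h0 | h0
    · constructor
      · rw [← h0, hu0]; simpa using hr.le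
      · rw [← h0]; linarith
    · constructor
      · refine le_of_tendsto (((hucont.abs).tendsto t₀).mono_left (nhdsWithin_le_nhds : nhdsWithin t₀ (Iio t₀) ≤ nhds t₀)) ?_
        filter_upwards [Ioo_mem_nhdsLT_of_mem (⟨h0, le_refl t₀⟩ : t₀ ∈ Ioc 0 t₀)] with s hs
        exact (hgood s hs.1.le hs.2).1
      · refine le_of_tendsto (((hvcont.abs).tendsto t₀).mono_left (nhdsWithin_le_nhds : nhdsWithin t₀ (Iio t₀) ≤ nhds t₀)) ?_
        filter_upwards [Ioo_mem_nhdsLT_of_mem (⟨h0, le_refl t₀⟩ : t₀ ∈ Ioc 0 t₀)] with s hs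
        exact (hgood s hs.1.le hs.2).2
  have hgood' : ∀ s ∈ Icc (0 : ℝ) t₀, |u s| ≤ r ∧ |v s| ≤ r := by
    intro s hs
    rcases eq_or_lt_of_le hs.2 with h | h
    · rw [h]; exact ht₀good
    · exact hgood s hs.1 h
  -- derivative bound gives |u t₀| ≤ r/8, |v t₀| ≤ 3r/8
  have hubd : ‖u t₀ - u 0‖ ≤ M * (t₀ - 0) := by
    refine norm_image_sub_le_of_norm_deriv_le_segment'
      (fun s hs => (hu s).hasDerivWithinAt) (fun s hs => ?_) t₀ ⟨ht₀mem.1, le_refl t₀⟩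
    have := hgood' s ⟨hs.1, hs.2.le⟩
    simpa [Real.norm_eq_abs] using hF s this.1 this.2
  have hvbd : ‖v t₀ - v 0‖ ≤ M * (t₀ - 0) := by
    refine norm_image_sub_le_of_norm_deriv_le_segment'
      (fun s hs => (hv s).hasDerivWithinAt) (fun s hs => ?_) t₀ ⟨ht₀mem.1, le_refl t₀⟩
    have := hgood' s ⟨hs.1, hs.2.le⟩
    simpa [Real.norm_eq_abs] using hG s this.1 this.2
  have hMt : M * t₀ ≤ r / 8 := by
    have : M * t₀ ≤ M * δ := by
      exact mul_le_mul_of_nonneg_left ht₀mem.2 hM.le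
    have hMδ : M * δ = r / 8 := by
      field_simp [hδ]
      rw [hδ]; field_simp
    linarith
  rw [Real.norm_eq_abs, sub_zero, hu0, sub_zero] at hubd
  rw [Real.norm_eq_abs, sub_zero] at hvbd
  have hu8 : |u t₀| ≤ r / 8 := by simpa using hubd.trans hMt
  have hv38 : |v t₀| ≤ 3 * r / 8 := by
    have := abs_sub_abs_le_abs_sub (v t₀) (v 0)
    linarith [hvbd.trans hMt]
  -- but t₀ ∈ closure B, so max |u t₀| |v t₀| ≥ r : contradiction
  have hcl : t₀ ∈ closure B := csInf_mem_closure hBne hBbd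
  have hclsub : closure B ⊆ {t | r ≤ max (|u t|) (|v t|)} := by
    refine closure_minimal ?_ (isClosed_le continuous_const ((hucont.abs).max (hvcont.abs)))
    rintro t ⟨_, h | h⟩
    · exact le_max_of_le_left h.le
    · exact le_max_of_le_right h.le
  have := hclsub hcl
  simp only [mem_setOf_eq] at this
  rcases max_cases (|u t₀|) (|v t₀|) with ⟨h, _⟩ | ⟨h, _⟩ <;> rw [h] at this <;> linarith

theorem point_map_second_deriv_y
    (f g : ℝ × ℝ → ℝ) (hf : ContDiff ℝ 3 f) (hg : ContDiff ℝ 3 g)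
    (hf0 : f (0, 0) ≠ 0)
    (X Y : ℝ → ℝ → ℝ → ℝ)
    (hX0 : ∀ x y, X 0 x y = x) (hY0 : ∀ x y, Y 0 x y = y)
    (hXflow : ∀ t x y, HasDerivAt (fun s => X s x y) (f (X t x y, Y t x y)) t)
    (hYflow : ∀ t x y, HasDerivAt (fun s => Y s x y) (g (X t x y, Y t x y)) t)
    (T : ℝ × ℝ → ℝ) (hT0 : T (0, 0) = 0)
    (hT : ∃ U ∈ nhds ((0, 0) : ℝ × ℝ),
      ContDiffOn ℝ 2 T U ∧ ∀ p ∈ U, X (T p) p.1 p.2 = -p.1) :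
    deriv (fun y => deriv (fun y' => Y (T (0, y')) 0 y') y) 0 = 0 := by
  obtain ⟨U, hU, hTC, hTX⟩ := hT
  -- radius r on which f is nonzero
  obtain ⟨r, hrpos, hrball⟩ : ∃ r > 0, ∀ p ∈ Metric.closedBall ((0, 0) : ℝ × ℝ) r, f p ≠ 0 := by
    have hopen : IsOpen {p : ℝ × ℝ | f p ≠ 0} := isOpen_ne.preimage hf.continuous
    have hmem : ((0, 0) : ℝ × ℝ) ∈ {p : ℝ × ℝ | f p ≠ 0} := hf0
    obtain ⟨ε, hε, hsub⟩ := Metric.isOpen_iff.mp hopen _ hmem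
    exact ⟨ε / 2, by positivity, fun p hp => hsub
      (lt_of_le_of_lt (Metric.mem_closedBall.mp hp) (by linarith))⟩
  -- bound for f and g on the closed ball
  obtain ⟨Mf, hMf⟩ := (isCompact_closedBall ((0, 0) : ℝ × ℝ) r).exists_bound_of_continuousOn
    hf.continuous.continuousOn
  obtain ⟨Mg, hMg⟩ := (isCompact_closedBall ((0, 0) : ℝ × ℝ) r).exists_bound_of_continuousOn
    hg.continuous.continuousOn
  set M : ℝ := max (max Mf Mg) 1 with hM
  have hMpos : 0 < M := lt_of_lt_of_le one_pos (le_max_right _ _)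
  set δ : ℝ := r / (8 * M) with hδ
  have hδpos : 0 < δ := by positivity
  -- membership in the closed ball from coordinate bounds
  have hmemball : ∀ a b : ℝ, |a| ≤ r → |b| ≤ r →
      ((a, b) : ℝ × ℝ) ∈ Metric.closedBall ((0, 0) : ℝ × ℝ) r := by
    intro a b ha hb
    rw [Metric.mem_closedBall, Prod.dist_eq]
    simp only [Real.dist_eq, sub_zero]
    exact max_le ha hb
  have hfM : ∀ a b : ℝ, |a| ≤ r → |b| ≤ r → |f (a, b)| ≤ M := by
    intro a b ha hb
    have := hMf _ (hmemball a b ha hb)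
    rw [Real.norm_eq_abs] at this
    exact this.trans ((le_max_left Mf Mg).trans (le_max_left _ _))
  have hgM : ∀ a b : ℝ, |a| ≤ r → |b| ≤ r → |g (a, b)| ≤ M := by
    intro a b ha hb
    have := hMg _ (hmemball a b ha hb)
    rw [Real.norm_eq_abs] at this
    exact this.trans ((le_max_right Mf Mg).trans (le_max_left _ _))
  -- key nonvanishing: for |y| ≤ r/4 and 0 < |t| ≤ δ, X t 0 y ≠ 0
  have key : ∀ y : ℝ, |y| ≤ r / 4 → ∀ t : ℝ, t ≠ 0 → |t| ≤ δ → X t 0 y ≠ 0 := by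
    intro y hy
    set u : ℝ → ℝ := fun t => X t 0 y with hu
    set v : ℝ → ℝ := fun t => Y t 0 y with hv
    have hu0 : u 0 = 0 := hX0 0 y
    have hv0 : |v 0| ≤ r / 4 := by rw [hv]; simpa [hY0] using hy
    have hud : ∀ t, HasDerivAt u (f (u t, v t)) t := fun t => hXflow t 0 y
    have hvd : ∀ t, HasDerivAt v (g (u t, v t)) t := fun t => hYflow t 0 y
    -- forward in time
    have hfwd : ∀ t ∈ Icc (0 : ℝ) δ, |u t| ≤ r ∧ |v t| ≤ r := by
      refine stay_in_box u v (fun t => f (u t, v t)) (fun t => g (u t, v t)) M r hMpos hrpos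
        hud hvd (fun t h1 h2 => hfM _ _ h1 h2) (fun t h1 h2 => hgM _ _ h1 h2) hu0 hv0
    -- backward in time
    have hbwd : ∀ t ∈ Icc (0 : ℝ) δ, |u (-t)| ≤ r ∧ |v (-t)| ≤ r := by
      have hud' : ∀ t, HasDerivAt (fun t => u (-t)) (f (u (-t), v (-t)) * (-1)) t := by
        intro t
        exact HasDerivAt.comp t (hud (-t)) (hasDerivAt_neg t)
      have hvd' : ∀ t, HasDerivAt (fun t => v (-t)) (g (u (-t), v (-t)) * (-1)) t := by
        intro t
        exact HasDerivAt.comp t (hvd (-t)) (hasDerivAt_neg t)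
      refine stay_in_box (fun t => u (-t)) (fun t => v (-t))
        (fun t => f (u (-t), v (-t)) * (-1)) (fun t => g (u (-t), v (-t)) * (-1))
        M r hMpos hrpos hud' hvd' (fun t h1 h2 => by
          rw [abs_mul, abs_neg, abs_one, mul_one]; exact hfM _ _ h1 h2)
        (fun t h1 h2 => by
          rw [abs_mul, abs_neg, abs_one, mul_one]; exact hgM _ _ h1 h2)
        (by simpa using hu0) (by simpa using hv0)
    have hstay : ∀ t : ℝ, |t| ≤ δ → |u t| ≤ r ∧ |v t| ≤ r := by
      intro t ht
      rcases le_or_gt 0 t with h | h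
      · exact hfwd t ⟨h, (le_abs_self t).trans ht⟩
      · have := hbwd (-t) ⟨by linarith, by rwa [abs_of_neg h] at ht⟩
        simpa using this
    intro t ht0 htδ hXt0
    rcases ht0.lt_or_gt with h | h
    · -- t < 0 : MVT on [t, 0]
      obtain ⟨c, hc, hceq⟩ := exists_hasDerivAt_eq_slope u (fun s => f (u s, v s)) h
        (fun s _ => (hud s).continuousAt.continuousWithinAt) (fun s _ => hud s)
      have hcδ : |c| ≤ δ := by
        rw [abs_of_neg h] at htδ
        rw [abs_le]; constructor <;> [linarith [hc.1]; linarith [hc.2]]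
      have := hstay c hcδ
      refine hrball _ (hmemball _ _ this.1 this.2) ?_
      rw [hceq, hu0, show u t = 0 from hXt0]
      simp
    · -- 0 < t : MVT on [0, t]
      obtain ⟨c, hc, hceq⟩ := exists_hasDerivAt_eq_slope u (fun s => f (u s, v s)) h
        (fun s _ => (hud s).continuousAt.continuousWithinAt) (fun s _ => hud s)
      have hcδ : |c| ≤ δ := by
        rw [abs_of_pos h] at htδ
        rw [abs_le]; constructor <;> [linarith [hc.1]; linarith [hc.2]]
      have := hstay c hcδ
      refine hrball _ (hmemball _ _ this.1 this.2) ?_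
      rw [hceq, hu0, show u t = 0 from hXt0]
      simp
  -- T (0, y) = 0 for y near 0, hence the map is the identity near 0
  have hTcont : ContinuousAt T ((0, 0) : ℝ × ℝ) :=
    (hTC.continuousOn).continuousAt hU
  have hycont : Continuous (fun y : ℝ => ((0 : ℝ), y)) := by continuity
  have hTy : ContinuousAt (fun y : ℝ => T (0, y)) 0 :=
    hTcont.comp hycont.continuousAt
  have hev : ∀ᶠ y in nhds (0 : ℝ), Y (T (0, y)) 0 y = y := by
    have h1 : ∀ᶠ y in nhds (0 : ℝ), ((0 : ℝ), y) ∈ U :=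
      hycont.continuousAt.eventually_mem hU
    have h2 : ∀ᶠ y in nhds (0 : ℝ), |y| ≤ r / 4 := by
      have : Metric.closedBall (0 : ℝ) (r / 4) ∈ nhds (0 : ℝ) :=
        Metric.closedBall_mem_nhds 0 (by positivity)
      filter_upwards [this] with y hy
      simpa [Real.dist_eq] using hy
    have h3 : ∀ᶠ y in nhds (0 : ℝ), |T (0, y)| ≤ δ := by
      have : Metric.closedBall (T (0, 0)) δ ∈ nhds (T ((0, 0) : ℝ × ℝ)) :=
        Metric.closedBall_mem_nhds _ hδpos
      filter_upwards [hTy.eventually_mem this] with y hy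
      rw [Metric.mem_closedBall, hT0, Real.dist_eq, sub_zero] at hy
      exact hy
    filter_upwards [h1, h2, h3] with y hyU hy4 hyδ
    have hX : X (T (0, y)) 0 y = 0 := by
      have := hTX (0, y) hyU
      simpa using this
    have hTy0 : T (0, y) = 0 := by
      by_contra hne
      exact key y hy4 _ hne hyδ hX
    rw [hTy0, hY0]
  -- conclude: the inner derivative is eventually 1, so the outer derivative is 0
  have hd : (fun y => deriv (fun y' => Y (T (0, y')) 0 y') y) =ᶠ[nhds (0 : ℝ)]
      fun _ => (1 : ℝ) := by
    filter_upwards [hev.eventually_nhds] with y hy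
    have : deriv (fun y' => Y (T (0, y')) 0 y') y = deriv (fun y' : ℝ => y') y :=
      Filter.EventuallyEq.deriv_eq hy
    rw [this, deriv_id'']
  rw [hd.deriv_eq, deriv_const]
end

section
/- Define P(x,y) = Y(T(x,y), x, y) as in the transversal crossing setup with (f,g) of class C^3. Then the mixed second derivative satisfies ∂²P/∂x∂y (0,0) = -2 g'_y(0,0)/f(0,0) + 2 g(0,0) f'_y(0,0)/f(0,0)². -/
open Set Real Filter MeasureTheory intervalIntegral


open Set Real Filter

/-- Escape-time / a priori bound lemma, rightward version. -/
lemma stay_right {E : Type*} [NormedAddCommGroup E] [NormedSpace ℝ E]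
    {γ γ' : ℝ → E} {t₀ t₁ M r : ℝ} (hM : 0 ≤ M) (ht : t₀ ≤ t₁)
    (hd : ∀ t ∈ Icc t₀ t₁, HasDerivAt γ (γ' t) t)
    (hb : ∀ t ∈ Icc t₀ t₁, ‖γ t - γ t₀‖ ≤ r → ‖γ' t‖ ≤ M)
    (hsmall : M * (t₁ - t₀) < r) :
    ∀ t ∈ Icc t₀ t₁, ‖γ t - γ t₀‖ ≤ M * (t - t₀) := by
  set A : Set ℝ := {t ∈ Icc t₀ t₁ | ∀ s ∈ Icc t₀ t, ‖γ s - γ t₀‖ ≤ M * (s - t₀)} with hA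
  have ht₀A : t₀ ∈ A := by
    refine ⟨⟨le_refl _, ht⟩, fun s hs => ?_⟩
    have : s = t₀ := le_antisymm hs.2 hs.1
    simp [this]
  have hAne : A.Nonempty := ⟨t₀, ht₀A⟩
  have hAbdd : BddAbove A := ⟨t₁, fun x hx => hx.1.2⟩
  set b := sSup A with hb'
  have hbt₀ : t₀ ≤ b := le_csSup hAbdd ht₀A
  have hbt₁ : b ≤ t₁ := csSup_le hAne fun x hx => hx.1.2
  have hbIcc : b ∈ Icc t₀ t₁ := ⟨hbt₀, hbt₁⟩
  -- every s < b in [t₀, b) satisfies the bound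
  have hlt : ∀ s ∈ Ico t₀ b, ‖γ s - γ t₀‖ ≤ M * (s - t₀) := by
    intro s hs
    obtain ⟨t, htA, hst⟩ := exists_lt_of_lt_csSup hAne hs.2
    exact htA.2 s ⟨hs.1, hst.le⟩
  have hbA : b ∈ A := by
    refine ⟨hbIcc, fun s hs => ?_⟩
    rcases lt_or_eq_of_le hs.2 with h | h
    · exact hlt s ⟨hs.1, h⟩
    · subst h
      rcases eq_or_lt_of_le hbt₀ with h0 | h0
      · simp [← h0]
      · -- continuity at b
        have hc : ContinuousAt (fun s => ‖γ s - γ t₀‖) b :=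
          (((hd b hbIcc).continuousAt).sub continuousAt_const).norm
        have hlim : Tendsto (fun s => ‖γ s - γ t₀‖) (nhdsWithin b (Iio b)) (nhds ‖γ b - γ t₀‖) :=
          hc.continuousWithinAt.tendsto
        refine le_of_tendsto hlim ?_
        filter_upwards [Ioo_mem_nhdsLT_of_mem ⟨h0, le_refl b⟩] with u hu
        calc ‖γ u - γ t₀‖ ≤ M * (u - t₀) := hlt u ⟨hu.1.le, hu.2⟩
          _ ≤ M * (b - t₀) := by nlinarith [hu.2]
  -- now show b = t₁
  rcases eq_or_lt_of_le hbt₁ with hbt | hbt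
  · intro t htIcc; exact hbA.2 t (by rw [hbt] at hbA ⊢; exact htIcc)
  · exfalso
    -- extend past b
    have hbbound : ‖γ b - γ t₀‖ ≤ M * (b - t₀) := hbA.2 b ⟨hbt₀, le_refl _⟩
    have hblt : ‖γ b - γ t₀‖ < r := lt_of_le_of_lt hbbound
      (lt_of_le_of_lt (by nlinarith) hsmall)
    have hcont : ContinuousAt γ b := (hd b hbIcc).continuousAt
    obtain ⟨η₀, hη₀, hball⟩ := Metric.continuousAt_iff.1 hcont (r - ‖γ b - γ t₀‖) (by linarith)
    set η := min (η₀ / 2) (t₁ - b) with hη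
    have hηpos : 0 < η := lt_min (by linarith) (by linarith)
    have hsubIcc : Icc b (b + η) ⊆ Icc t₀ t₁ := by
      apply Icc_subset_Icc hbt₀
      have := min_le_right (η₀ / 2) (t₁ - b)
      linarith [this]
    have hrball : ∀ s ∈ Icc b (b + η), ‖γ s - γ t₀‖ ≤ r := by
      intro s hs
      have hds : dist s b < η₀ := by
        rw [Real.dist_eq, abs_of_nonneg (by linarith [hs.1])]
        have := min_le_left (η₀ / 2) (t₁ - b)
        linarith [hs.2]
      have := hball hds
      rw [dist_eq_norm] at this
      calc ‖γ s - γ t₀‖ = ‖(γ s - γ b) + (γ b - γ t₀)‖ := by rw [sub_add_sub_cancel]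
        _ ≤ ‖γ s - γ b‖ + ‖γ b - γ t₀‖ := norm_add_le _ _
        _ ≤ r := by linarith [this]
    have hMVT : ∀ s ∈ Icc b (b + η), ‖γ s - γ b‖ ≤ M * (s - b) := by
      apply norm_image_sub_le_of_norm_deriv_le_segment'
      · intro s hs; exact (hd s (hsubIcc hs)).hasDerivWithinAt
      · intro s hs
        exact hb s (hsubIcc (Ico_subset_Icc_self hs)) (hrball s (Ico_subset_Icc_self hs))
    have hbηA : b + η ∈ A := by
      have hmem : b + η ∈ Icc t₀ t₁ := hsubIcc ⟨by linarith, le_refl _⟩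
      refine ⟨hmem, ?_⟩
      intro s hs
      rcases le_or_gt s b with h | h
      · exact hbA.2 s ⟨hs.1, h⟩
      · calc ‖γ s - γ t₀‖ = ‖(γ s - γ b) + (γ b - γ t₀)‖ := by rw [sub_add_sub_cancel]
          _ ≤ ‖γ s - γ b‖ + ‖γ b - γ t₀‖ := norm_add_le _ _
          _ ≤ M * (s - b) + M * (b - t₀) := add_le_add (hMVT s ⟨h.le, hs.2⟩) hbbound
          _ = M * (s - t₀) := by ring
    have := le_csSup hAbdd hbηA
    linarith

/-- Two-sided escape-time lemma. -/
lemma stay_two {E : Type*} [NormedAddCommGroup E] [NormedSpace ℝ E]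
    {γ γ' : ℝ → E} {t₀ τ M r : ℝ} (hM : 0 ≤ M) (hτ : 0 ≤ τ)
    (hd : ∀ t ∈ Icc (t₀ - τ) (t₀ + τ), HasDerivAt γ (γ' t) t)
    (hb : ∀ t ∈ Icc (t₀ - τ) (t₀ + τ), ‖γ t - γ t₀‖ ≤ r → ‖γ' t‖ ≤ M)
    (hsmall : M * τ < r) :
    ∀ t ∈ Icc (t₀ - τ) (t₀ + τ), ‖γ t - γ t₀‖ ≤ M * |t - t₀| := by
  intro t ht
  have hsub : Icc t₀ (t₀ + τ) ⊆ Icc (t₀ - τ) (t₀ + τ) := Icc_subset_Icc (by linarith) le_rfl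
  rcases le_or_gt t₀ t with h | h
  · have := stay_right (γ := γ) (γ' := γ') hM (by linarith : t₀ ≤ t₀ + τ)
      (fun s hs => hd s (hsub hs)) (fun s hs hr => hb s (hsub hs) hr)
      (by linarith [hsmall] : M * (t₀ + τ - t₀) < r) t ⟨h, ht.2⟩
    rwa [abs_of_nonneg (by linarith)]
  · -- reflect
    set gg : ℝ → E := fun s => γ (2 * t₀ - s) with hgg
    have hd' : ∀ s ∈ Icc t₀ (t₀ + τ), HasDerivAt gg (-γ' (2 * t₀ - s)) s := by
      intro s hs
      have hmem : 2 * t₀ - s ∈ Icc (t₀ - τ) (t₀ + τ) := by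
        simp only [mem_Icc] at hs ⊢; constructor <;> linarith [hs.1, hs.2]
      have h1 : HasDerivAt (fun x : ℝ => 2 * t₀ - x) (-1) s := by
        simpa using (hasDerivAt_id s).const_sub (2 * t₀)
      have := HasDerivAt.scomp (𝕜 := ℝ) s (hd _ hmem) h1
      rw [neg_one_smul] at this
      exact this
    have hre : gg t₀ = γ t₀ := by simp only [hgg]; congr 1; ring
    have := stay_right (γ := gg) (γ' := fun s => -γ' (2 * t₀ - s)) hM
      (by linarith : t₀ ≤ t₀ + τ) hd'
      (fun s hs hr => by
        rw [norm_neg]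
        refine hb _ ?_ ?_
        · simp only [mem_Icc] at hs ⊢; constructor <;> linarith [hs.1, hs.2]
        · rwa [hre] at hr)
      (by linarith [hsmall] : M * (t₀ + τ - t₀) < r) (2 * t₀ - t)
      ⟨by linarith, by linarith [ht.1]⟩
    rw [hre] at this
    have he : gg (2 * t₀ - t) = γ t := by simp only [hgg]; congr 1; ring
    rw [he] at this
    rw [abs_of_nonpos (by linarith : t - t₀ ≤ 0)]
    calc ‖γ t - γ t₀‖ ≤ M * (2 * t₀ - t - t₀) := this
      _ = M * -(t - t₀) := by ring

/-- Two-sided Grönwall inequality wrapper. -/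
lemma gronwall_two {E : Type*} [NormedAddCommGroup E] [NormedSpace ℝ E]
    {z z' : ℝ → E} {t₀ τ K ε δ : ℝ} (hτ : 0 ≤ τ)
    (hd : ∀ t ∈ Icc (t₀ - τ) (t₀ + τ), HasDerivAt z (z' t) t)
    (h0 : ‖z t₀‖ ≤ δ)
    (hbnd : ∀ t ∈ Icc (t₀ - τ) (t₀ + τ), ‖z' t‖ ≤ K * ‖z t‖ + ε) :
    ∀ t ∈ Icc (t₀ - τ) (t₀ + τ), ‖z t‖ ≤ gronwallBound δ K ε |t - t₀| := by
  intro t ht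
  have hsub : Icc t₀ (t₀ + τ) ⊆ Icc (t₀ - τ) (t₀ + τ) := Icc_subset_Icc (by linarith) le_rfl
  rcases le_or_gt t₀ t with h | h
  · have := norm_le_gronwallBound_of_norm_deriv_right_le (f := z) (f' := z')
      (a := t₀) (b := t₀ + τ)
      (fun s hs => (hd s (hsub hs)).continuousAt.continuousWithinAt)
      (fun s hs => (hd s (hsub (Ico_subset_Icc_self hs))).hasDerivWithinAt)
      h0 (fun s hs => hbnd s (hsub (Ico_subset_Icc_self hs))) t ⟨h, ht.2⟩
    rwa [abs_of_nonneg (by linarith)]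
  · set gg : ℝ → E := fun s => z (2 * t₀ - s) with hgg
    have hd' : ∀ s ∈ Icc t₀ (t₀ + τ), HasDerivAt gg (-z' (2 * t₀ - s)) s := by
      intro s hs
      simp only [mem_Icc] at hs
      have hmem : 2 * t₀ - s ∈ Icc (t₀ - τ) (t₀ + τ) := by
        simp only [mem_Icc]; constructor <;> linarith [hs.1, hs.2]
      have h1 : HasDerivAt (fun x : ℝ => 2 * t₀ - x) (-1) s := by
        simpa using (hasDerivAt_id s).const_sub (2 * t₀)
      have := HasDerivAt.scomp (𝕜 := ℝ) s (hd _ hmem) h1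
      rw [neg_one_smul] at this
      exact this
    have hre : gg t₀ = z t₀ := by simp only [hgg]; congr 1; ring
    have := norm_le_gronwallBound_of_norm_deriv_right_le (f := gg)
      (f' := fun s => -z' (2 * t₀ - s)) (a := t₀) (b := t₀ + τ) (δ := δ) (K := K) (ε := ε)
      (fun s hs => (hd' s hs).continuousAt.continuousWithinAt)
      (fun s hs => (hd' s (Ico_subset_Icc_self hs)).hasDerivWithinAt)
      (by rwa [hre])
      (fun s hs => by
        simp only [mem_Ico] at hs
        have hmem : 2 * t₀ - s ∈ Icc (t₀ - τ) (t₀ + τ) := by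
          simp only [mem_Icc]; constructor <;> linarith [hs.1, hs.2]
        have := hbnd _ hmem
        simpa [hgg] using this)
      (2 * t₀ - t) ⟨by linarith, by linarith [ht.1]⟩
    have he : gg (2 * t₀ - t) = z t := by simp only [hgg]; congr 1; ring
    rw [he] at this
    rw [abs_of_nonpos (by linarith : t - t₀ ≤ 0)]
    calc ‖z t‖ ≤ gronwallBound δ K ε (2 * t₀ - t - t₀) := this
      _ = gronwallBound δ K ε (-(t - t₀)) := by congr 1; ring

/-- Simple upper bound on the Grönwall bound with zero initial value. -/
lemma gronwallBound_zero_le {K ε s b : ℝ} (hK : 0 ≤ K) (hε : 0 ≤ ε) (hs : 0 ≤ s) (hsb : s ≤ b) :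
    gronwallBound 0 K ε s ≤ ε * (b * Real.exp (K * b)) := by
  have hb : 0 ≤ b := le_trans hs hsb
  rcases eq_or_lt_of_le hK with h | h
  · rw [← h, gronwallBound_K0]
    show (0 : ℝ) + ε * s ≤ _
    rw [zero_mul, Real.exp_zero]
    nlinarith
  · rw [gronwallBound_of_K_ne_0 (ne_of_gt h)]
    have h1 : Real.exp (K * s) ≤ Real.exp (K * b) := by
      apply Real.exp_le_exp.2; nlinarith
    have h2 : Real.exp (K * b) - 1 ≤ K * b * Real.exp (K * b) := by
      have := Real.add_one_le_exp (-(K * b))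
      have h3 : 0 < Real.exp (K * b) := Real.exp_pos _
      have h4 : Real.exp (-(K * b)) * Real.exp (K * b) = 1 := by
        rw [← Real.exp_add]; simp
      nlinarith
    have h5 : 0 ≤ ε / K := div_nonneg hε hK
    have h6 : ε / K * (Real.exp (K * s) - 1) ≤ ε / K * (Real.exp (K * b) - 1) := by
      apply mul_le_mul_of_nonneg_left _ h5; linarith
    calc 0 * Real.exp (K * s) + ε / K * (Real.exp (K * s) - 1)
        = ε / K * (Real.exp (K * s) - 1) := by ring
      _ ≤ ε / K * (K * b * Real.exp (K * b)) := by
          refine le_trans h6 (mul_le_mul_of_nonneg_left h2 h5)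
      _ = ε * (b * Real.exp (K * b)) := by field_simp

/-- A quadratic error bound implies differentiability. -/
lemma hasDerivAt_of_sq_bound {φ : ℝ → ℝ} {d C x₀ : ℝ} (hC : 0 ≤ C)
    (h : ∀ᶠ x in nhds x₀, |φ x - φ x₀ - (x - x₀) * d| ≤ C * (x - x₀) ^ 2) :
    HasDerivAt φ d x₀ := by
  rw [hasDerivAt_iff_isLittleO]
  rw [Asymptotics.isLittleO_iff]
  intro c hc
  have hev : ∀ᶠ x in nhds x₀, |x - x₀| ≤ c / (C + 1) := by
    have : Tendsto (fun x : ℝ => |x - x₀|) (nhds x₀) (nhds |x₀ - x₀|) := by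
      exact (continuous_id.sub continuous_const).abs.tendsto x₀
    rw [sub_self, abs_zero] at this
    exact this.eventually_le_const (by positivity)
  filter_upwards [h, hev] with x hx1 hx2
  have h1 : C * (x - x₀) ^ 2 ≤ c * |x - x₀| := by
    have h2 : |x - x₀| ≥ 0 := abs_nonneg _
    have h3 : (x - x₀) ^ 2 = |x - x₀| ^ 2 := (sq_abs _).symm
    rw [h3]
    have h4 : C * |x - x₀| ≤ c := by
      calc C * |x - x₀| ≤ C * (c / (C + 1)) := by nlinarith
        _ ≤ c := by
          rw [mul_div_assoc']
          rw [div_le_iff₀ (by linarith)]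
          nlinarith
    nlinarith
  calc ‖φ x - φ x₀ - (x - x₀) • d‖ = |φ x - φ x₀ - (x - x₀) * d| := rfl
    _ ≤ C * (x - x₀) ^ 2 := hx1
    _ ≤ c * |x - x₀| := h1
    _ = c * ‖x - x₀‖ := rfl

set_option maxHeartbeats 4000000 in
theorem point_map_mixed_deriv
    (f g : ℝ × ℝ → ℝ) (hf : ContDiff ℝ 3 f) (hg : ContDiff ℝ 3 g)
    (hf0 : f (0, 0) ≠ 0)
    (X Y : ℝ → ℝ → ℝ → ℝ)
    (hX0 : ∀ x y, X 0 x y = x) (hY0 : ∀ x y, Y 0 x y = y)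
    (hXflow : ∀ t x y, HasDerivAt (fun s => X s x y) (f (X t x y, Y t x y)) t)
    (hYflow : ∀ t x y, HasDerivAt (fun s => Y s x y) (g (X t x y, Y t x y)) t)
    (T : ℝ × ℝ → ℝ) (hT0 : T (0, 0) = 0)
    (hT : ∃ U ∈ nhds ((0, 0) : ℝ × ℝ),
      ContDiffOn ℝ 2 T U ∧ ∀ p ∈ U, X (T p) p.1 p.2 = -p.1) :
    deriv (fun x => deriv (fun y => Y (T (x, y)) x y) 0) 0 =
      -2 * deriv (fun y => g (0, y)) 0 / f (0, 0)
        + 2 * g (0, 0) * deriv (fun y => f (0, y)) 0 / (f (0, 0)) ^ 2 := by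
  classical
  obtain ⟨U, hUnhds, hTc, hTX⟩ := hT
  -- the open set where f ≠ 0
  set U₀ : Set (ℝ × ℝ) := {p | f p ≠ 0} with hU₀def
  have hU₀open : IsOpen U₀ := isOpen_ne.preimage hf.continuous
  have h00 : ((0, 0) : ℝ × ℝ) ∈ U₀ := hf0
  -- auxiliary scalar field h = g / f and its partial derivative hy in the second variable
  set h : ℝ × ℝ → ℝ := fun p => g p / f p with hhdef
  set hy : ℝ × ℝ → ℝ := fun p => fderiv ℝ h p (0, 1) with hhydef
  have hhC2 : ContDiffOn ℝ 2 h U₀ :=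
    ContDiffOn.div ((hg.of_le (by norm_num)).contDiffOn) ((hf.of_le (by norm_num)).contDiffOn)
      (fun p hp => hp)
  have hyC1 : ContDiffOn ℝ 1 hy U₀ :=
    (hhC2.fderiv_of_isOpen hU₀open (by norm_num)).clm_apply contDiffOn_const
  have hycont : ContinuousOn hy U₀ := hyC1.continuousOn
  -- partial derivative fact
  have hpart : ∀ p : ℝ × ℝ, p ∈ U₀ → HasDerivAt (fun u => h (p.1, u)) (hy p) p.2 := by
    intro p hp
    have hdiff : DifferentiableAt ℝ h p :=
      (hhC2.differentiableOn (by norm_num)).differentiableAt (hU₀open.mem_nhds hp)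
    have hline : HasDerivAt (fun u : ℝ => ((p.1, u) : ℝ × ℝ)) ((0 : ℝ), (1 : ℝ)) p.2 :=
      (hasDerivAt_const p.2 p.1).prodMk (hasDerivAt_id p.2)
    have := hdiff.hasFDerivAt.comp_hasDerivAt p.2 hline
    exact this
  -- choose a closed ball inside U₀
  obtain ⟨r, hr, hrU₀⟩ : ∃ r > 0, Metric.closedBall ((0, 0) : ℝ × ℝ) r ⊆ U₀ := by
    rcases Metric.nhds_basis_closedBall.mem_iff.1 (hU₀open.mem_nhds h00) with ⟨r, hr, hrs⟩
    exact ⟨r, hr, hrs⟩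
  set S : Set (ℝ × ℝ) := Metric.closedBall ((0, 0) : ℝ × ℝ) r with hSdef
  have hScomp : IsCompact S := isCompact_closedBall _ _
  have hSconv : Convex ℝ S := convex_closedBall _ _
  have hmemS : ∀ s u : ℝ, |s| ≤ r → |u| ≤ r → ((s, u) : ℝ × ℝ) ∈ S := by
    intro s u hs hu
    simp only [hSdef, Metric.mem_closedBall, Prod.dist_eq, dist_zero_right,
      Real.norm_eq_abs, max_le_iff]
    exact ⟨hs, hu⟩
  have hmemS' : ∀ p : ℝ × ℝ, p ∈ S → |p.1| ≤ r ∧ |p.2| ≤ r := by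
    intro p hp
    simp only [hSdef, Metric.mem_closedBall, Prod.dist_eq, dist_zero_right,
      Real.norm_eq_abs, max_le_iff] at hp
    exact hp
  -- bounds on S
  obtain ⟨MF0, hMF0⟩ := hScomp.exists_bound_of_continuousOn
    ((hf.continuous.prodMk hg.continuous) : Continuous fun p : ℝ × ℝ => ((f p, g p) : ℝ × ℝ)).continuousOn
  set MF := max MF0 1 with hMFdef
  have hMF1 : (1 : ℝ) ≤ MF := le_max_right _ _
  have hMFpos : (0 : ℝ) < MF := lt_of_lt_of_le one_pos hMF1
  have hMF : ∀ p ∈ S, ‖((f p, g p) : ℝ × ℝ)‖ ≤ MF := fun p hp => (hMF0 p hp).trans (le_max_left _ _)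
  obtain ⟨Mh0, hMh0⟩ := hScomp.exists_bound_of_continuousOn (hhC2.continuousOn.mono hrU₀)
  set Mh := max Mh0 1 with hMhdef
  have hMh1 : (1 : ℝ) ≤ Mh := le_max_right _ _
  have hMhpos : (0 : ℝ) < Mh := lt_of_lt_of_le one_pos hMh1
  have hMh : ∀ p ∈ S, |h p| ≤ Mh := fun p hp => (hMh0 p hp).trans (le_max_left _ _)
  have hdercont : ContinuousOn (fderiv ℝ h) U₀ :=
    hhC2.continuousOn_fderiv_of_isOpen hU₀open (by norm_num)
  obtain ⟨K0, hK0⟩ := hScomp.exists_bound_of_continuousOn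
    ((hdercont.mono hrU₀).norm)
  set K := max K0 1 with hKdef
  have hK1 : (1 : ℝ) ≤ K := le_max_right _ _
  have hKpos : (0 : ℝ) < K := lt_of_lt_of_le one_pos hK1
  have hK : ∀ p ∈ S, ‖fderiv ℝ h p‖ ≤ K := fun p hp => by
    have := hK0 p hp; simp only [norm_norm] at this; exact this.trans (le_max_left _ _)
  have hdercont2 : ContinuousOn (fderiv ℝ hy) U₀ :=
    hyC1.continuousOn_fderiv_of_isOpen hU₀open (by norm_num)
  obtain ⟨L0, hL0⟩ := hScomp.exists_bound_of_continuousOn ((hdercont2.mono hrU₀).norm)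
  set L := max L0 1 with hLdef
  have hL1 : (1 : ℝ) ≤ L := le_max_right _ _
  have hLpos : (0 : ℝ) < L := lt_of_lt_of_le one_pos hL1
  have hL : ∀ p ∈ S, ‖fderiv ℝ hy p‖ ≤ L := fun p hp => by
    have := hL0 p hp; simp only [norm_norm] at this; exact this.trans (le_max_left _ _)
  -- Lipschitz estimates on S
  have hdiffS : ∀ p ∈ S, DifferentiableAt ℝ h p := fun p hp =>
    (hhC2.differentiableOn (by norm_num)).differentiableAt (hU₀open.mem_nhds (hrU₀ hp))
  have hdiffS2 : ∀ p ∈ S, DifferentiableAt ℝ hy p := fun p hp =>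
    (hyC1.differentiableOn (by norm_num)).differentiableAt (hU₀open.mem_nhds (hrU₀ hp))
  have hLiph : ∀ p ∈ S, ∀ q ∈ S, |h p - h q| ≤ K * ‖p - q‖ := by
    intro p hp q hq
    have := hSconv.norm_image_sub_le_of_norm_fderiv_le hdiffS hK hq hp
    simpa [Real.norm_eq_abs] using this
  have hLiphy : ∀ p ∈ S, ∀ q ∈ S, |hy p - hy q| ≤ L * ‖p - q‖ := by
    intro p hp q hq
    have := hSconv.norm_image_sub_le_of_norm_fderiv_le hdiffS2 hL hq hp
    simpa [Real.norm_eq_abs] using this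
  have hyK : ∀ p ∈ S, |hy p| ≤ K := by
    intro p hp
    have h1 : ‖(fderiv ℝ h p) (0, 1)‖ ≤ ‖fderiv ℝ h p‖ * ‖((0 : ℝ), (1 : ℝ))‖ :=
      (fderiv ℝ h p).le_opNorm _
    have h2 : ‖((0 : ℝ), (1 : ℝ))‖ = 1 := by
      simp [Prod.norm_def]
    rw [h2, mul_one] at h1
    exact le_trans h1 (hK p hp)
  -- norm of vertical difference
  have hvert : ∀ s u₁ u₂ : ℝ, ‖((s, u₁) : ℝ × ℝ) - (s, u₂)‖ = |u₁ - u₂| := by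
    intro s u₁ u₂
    simp [Prod.norm_def, Prod.sub_def, Real.norm_eq_abs]
  -- Taylor estimate for h in the second variable
  have hTaylor : ∀ s u₁ u₂ : ℝ, ((s, u₁) : ℝ × ℝ) ∈ S → ((s, u₂) : ℝ × ℝ) ∈ S →
      |h (s, u₂) - h (s, u₁) - hy (s, u₁) * (u₂ - u₁)| ≤ L * |u₂ - u₁| ^ 2 := by
    intro s u₁ u₂ h1 h2
    set ψ : ℝ → ℝ := fun u => h (s, u) - hy (s, u₁) * u with hψdef
    have hseg : ∀ u ∈ uIcc u₁ u₂, ((s, u) : ℝ × ℝ) ∈ S := by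
      intro u hu
      have hs0 : |s| ≤ r := (hmemS' _ h1).1
      have hu1 : |u₁| ≤ r := (hmemS' _ h1).2
      have hu2 : |u₂| ≤ r := (hmemS' _ h2).2
      refine hmemS s u hs0 ?_
      rw [abs_le] at hu1 hu2 ⊢
      rcases le_total u₁ u₂ with hc | hc
      · rw [uIcc_of_le hc, mem_Icc] at hu
        exact ⟨le_trans hu1.1 hu.1, le_trans hu.2 hu2.2⟩
      · rw [uIcc_of_ge hc, mem_Icc] at hu
        exact ⟨le_trans hu2.1 hu.1, le_trans hu.2 hu1.2⟩
    have hψd : ∀ u ∈ uIcc u₁ u₂,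
        HasDerivWithinAt ψ (hy (s, u) - hy (s, u₁)) (uIcc u₁ u₂) u := by
      intro u hu
      have := (hpart (s, u) (hrU₀ (hseg u hu))).sub
        ((hasDerivAt_id u).const_mul (hy (s, u₁)))
      rw [mul_one] at this
      exact this.hasDerivWithinAt
    have hψb : ∀ u ∈ uIcc u₁ u₂, ‖hy (s, u) - hy (s, u₁)‖ ≤ L * |u₂ - u₁| := by
      intro u hu
      have := hLiphy (s, u) (hseg u hu) (s, u₁) (hseg u₁ left_mem_uIcc)
      rw [hvert] at this
      refine le_trans this (mul_le_mul_of_nonneg_left ?_ (le_of_lt hLpos))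
      rcases le_total u₁ u₂ with hc | hc
      · rw [uIcc_of_le hc, mem_Icc] at hu
        rw [abs_of_nonneg (by linarith [hu.1] : (0:ℝ) ≤ u - u₁),
          abs_of_nonneg (by linarith [hc] : (0:ℝ) ≤ u₂ - u₁)]
        linarith [hu.2]
      · rw [uIcc_of_ge hc, mem_Icc] at hu
        rw [abs_of_nonpos (by linarith [hu.2] : u - u₁ ≤ 0),
          abs_of_nonpos (by linarith [hc] : u₂ - u₁ ≤ 0)]
        linarith [hu.1]
    have := (convex_uIcc u₁ u₂).norm_image_sub_le_of_norm_hasDerivWithin_le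
      hψd hψb left_mem_uIcc right_mem_uIcc
    have heq : ψ u₂ - ψ u₁ = h (s, u₂) - h (s, u₁) - hy (s, u₁) * (u₂ - u₁) := by
      simp only [hψdef]; ring
    rw [heq] at this
    calc |h (s, u₂) - h (s, u₁) - hy (s, u₁) * (u₂ - u₁)|
        ≤ L * |u₂ - u₁| * ‖u₂ - u₁‖ := this
      _ = L * |u₂ - u₁| ^ 2 := by rw [Real.norm_eq_abs]; ring
  -- the flow curves
  set γ : ℝ × ℝ → ℝ → ℝ × ℝ := fun p t => ((X t p.1 p.2, Y t p.1 p.2) : ℝ × ℝ) with hγdef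
  have hγd : ∀ (p : ℝ × ℝ) (t : ℝ),
      HasDerivAt (γ p) ((f (γ p t), g (γ p t)) : ℝ × ℝ) t := fun p t =>
    (hXflow t p.1 p.2).prodMk (hYflow t p.1 p.2)
  have hγ0 : ∀ p : ℝ × ℝ, γ p 0 = p := fun p => by
    simp only [hγdef, hX0, hY0]
  -- main constants
  set l : ℝ := r / (2 * Mh) with hldef
  have hlpos : 0 < l := by positivity
  have hlr : l ≤ r / 2 := by
    rw [hldef, div_le_div_iff₀ (by positivity) (by norm_num)]
    nlinarith
  have hMhl : Mh * l = r / 2 := by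
    rw [hldef]; field_simp
  set τ : ℝ := l / (4 * MF) with hτdef
  have hτpos : 0 < τ := by positivity
  have hMFτ : MF * τ = l / 4 := by
    rw [hτdef]; field_simp
  -- continuity of T near the origin
  have hTcont : ContinuousAt T (0, 0) :=
    (hTc.continuousOn.continuousAt hUnhds)
  have hTev : ∀ᶠ p in nhds ((0, 0) : ℝ × ℝ), p ∈ U ∧ |T p| ≤ τ := by
    have h1 : ∀ᶠ p in nhds ((0, 0) : ℝ × ℝ), |T p - T (0, 0)| < τ := by
      have := Metric.continuousAt_iff.1 hTcont τ hτpos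
      obtain ⟨d, hd, hball⟩ := this
      rw [Metric.eventually_nhds_iff]
      exact ⟨d, hd, fun y hy' => by
        have := hball (by simpa [dist_comm] using hy')
        rwa [Real.dist_eq] at this⟩
    filter_upwards [hUnhds, h1] with p h1' h2'
    rw [hT0, sub_zero] at h2'
    exact ⟨h1', h2'.le⟩
  obtain ⟨δ₀, hδ₀pos, hδ₀⟩ := Metric.eventually_nhds_iff.1 hTev
  -- choice of δ
  set δ : ℝ := min (min (r / 2) (l / 8)) (δ₀ / 2) with hδdef
  have hδpos : 0 < δ := by
    apply lt_min (lt_min (by positivity) (by positivity)) (by positivity)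
  have hδr : δ ≤ r / 2 := le_trans (min_le_left _ _) (min_le_left _ _)
  have hδl : δ ≤ l / 8 := le_trans (min_le_left _ _) (min_le_right _ _)
  have hδU : ∀ p : ℝ × ℝ, ‖p‖ ≤ δ → p ∈ U ∧ |T p| ≤ τ := by
    intro p hp
    apply hδ₀
    have h00' : ((0, 0) : ℝ × ℝ) = 0 := rfl
    rw [h00', dist_zero_right]
    calc ‖p‖ ≤ δ := hp
      _ ≤ δ₀ / 2 := min_le_right _ _
      _ < δ₀ := by linarith
  have hnormpair : ∀ x y : ℝ, ‖((x, y) : ℝ × ℝ)‖ = max |x| |y| := by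
    intro x y
    simp [Prod.norm_def, Real.norm_eq_abs]
  -- Picard–Lindelöf existence for the scalar equation u' = h(s, u)
  have hPL : ∀ x y : ℝ, ∃ v : ℝ → ℝ, |x| ≤ δ → |y| ≤ δ →
      (v x = y ∧ ∀ s ∈ Icc (x - l) (x + l),
        HasDerivWithinAt v (h (s, v s)) (Icc (x - l) (x + l)) s) := by
    intro x y
    by_cases hxy : |x| ≤ δ ∧ |y| ≤ δ
    · obtain ⟨hx, hy'⟩ := hxy
      have hrect : ∀ s u : ℝ, s ∈ Icc (x - l) (x + l) → u ∈ Metric.closedBall y (r / 2) →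
          ((s, u) : ℝ × ℝ) ∈ S := by
        intro s u hs hu
        rw [mem_Icc] at hs
        rw [Metric.mem_closedBall, Real.dist_eq] at hu
        apply hmemS
        · rw [abs_le]; rw [abs_le] at hx
          constructor
          · linarith [hlr, hδr, hs.1, hx.1]
          · linarith [hlr, hδr, hs.2, hx.2]
        · rw [abs_le]; rw [abs_le] at hy'
          rw [abs_le] at hu
          constructor
          · linarith [hδr, hu.1, hy'.1]
          · linarith [hδr, hu.2, hy'.2]
      have hpl : IsPicardLindelof (fun s u => h (s, u)) (tmin := x - l) (tmax := x + l)
          ⟨x, by rw [mem_Icc]; constructor <;> linarith⟩ y (r / 2).toNNReal 0 Mh.toNNReal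
          K.toNNReal := by
        have hr2 : (((r / 2).toNNReal : NNReal) : ℝ) = r / 2 := Real.coe_toNNReal _ (by positivity)
        have hMh' : ((Mh.toNNReal : NNReal) : ℝ) = Mh := Real.coe_toNNReal _ hMhpos.le
        constructor
        · intro t ht
          rw [hr2]
          rw [lipschitzOnWith_iff_dist_le_mul]
          intro u1 hu1 u2 hu2
          rw [Real.dist_eq, Real.dist_eq]
          have := hLiph (t, u1) (hrect t u1 ht hu1) (t, u2) (hrect t u2 ht hu2)
          rw [hvert] at this
          calc |h (t, u1) - h (t, u2)| ≤ K * |u1 - u2| := this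
            _ = ↑K.toNNReal * |u1 - u2| := by
                rw [Real.coe_toNNReal K (le_of_lt hKpos)]
        · intro u hu
          rw [hr2] at hu
          apply (hhC2.continuousOn.mono hrU₀).comp
            (Continuous.continuousOn (continuous_id.prodMk continuous_const))
          intro t ht
          exact hrect t u ht hu
        · intro t ht u hu
          rw [hr2] at hu
          rw [hMh']
          have := hMh (t, u) (hrect t u ht hu)
          rwa [Real.norm_eq_abs]
        · show ((Mh.toNNReal : NNReal) : ℝ) * max (x + l - x) (x - (x - l))
              ≤ (((r / 2).toNNReal : NNReal) : ℝ) - ((0 : NNReal) : ℝ)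
          rw [hr2, hMh', NNReal.coe_zero, sub_zero]
          have : max (x + l - x) (x - (x - l)) = l := by
            rw [show x + l - x = l by ring, show x - (x - l) = l by ring, max_self]
          rw [this]
          rw [hMhl]
      obtain ⟨v, hv0, hvd⟩ := hpl.exists_eq_forall_mem_Icc_hasDerivWithinAt₀
      exact ⟨v, fun _ _ => ⟨hv0, hvd⟩⟩
    · exact ⟨fun _ => 0, fun h1 h2 => absurd ⟨h1, h2⟩ hxy⟩
  choose V hV using hPL
  -- Stage 1: basic facts about the scalar solutions V x y
  have hVfact : ∀ x y : ℝ, |x| ≤ δ → |y| ≤ δ →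
      (∀ s ∈ Icc (x - 3 * l / 4) (x + 3 * l / 4),
        HasDerivAt (V x y) (h (s, V x y s)) s ∧ |V x y s - y| ≤ Mh * |s - x| ∧
          ((s, V x y s) : ℝ × ℝ) ∈ S) := by
    intro x y hx hy'
    obtain ⟨hV0, hVd⟩ := hV x y hx hy'
    have hdAt : ∀ s ∈ Icc (x - 3 * l / 4) (x + 3 * l / 4),
        HasDerivAt (V x y) (h (s, V x y s)) s := by
      intro s hs
      rw [mem_Icc] at hs
      refine (hVd s ?_).hasDerivAt (Icc_mem_nhds ?_ ?_)
      · rw [mem_Icc]; constructor <;> linarith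
      · linarith
      · linarith
    have hdAt' : ∀ s ∈ Icc (x - 3 * l / 4) (x + 3 * l / 4),
        HasDerivAt (V x y) ((fun s => h (s, V x y s)) s) s := hdAt
    have hstay := stay_two (γ := V x y) (γ' := fun s => h (s, V x y s)) (t₀ := x)
      (τ := 3 * l / 4) (M := Mh) (r := r / 2) hMhpos.le (by positivity)
      hdAt'
      (fun t ht hdist => by
        rw [Real.norm_eq_abs]
        rw [Real.norm_eq_abs, hV0] at hdist
        rw [mem_Icc] at ht
        refine hMh _ (hmemS t (V x y t) ?_ ?_)
        · rw [abs_le]; rw [abs_le] at hx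
          constructor
          · linarith [hlr, hδr, ht.1, hx.1]
          · linarith [hlr, hδr, ht.2, hx.2]
        · rw [abs_le]; rw [abs_le] at hy' hdist
          constructor
          · linarith [hδr, hdist.1, hy'.1]
          · linarith [hδr, hdist.2, hy'.2])
      (by nlinarith [hMhl, hr, hlpos])
    intro s hs
    have hsb := hstay s hs
    rw [Real.norm_eq_abs, hV0] at hsb
    rw [mem_Icc] at hs
    have habs : |s - x| ≤ 3 * l / 4 := by
      rw [abs_le]; constructor <;> linarith [hs.1, hs.2]
    refine ⟨hdAt s (by rw [mem_Icc]; exact hs), hsb, ?_⟩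
    apply hmemS
    · rw [abs_le]; rw [abs_le] at hx
      constructor
      · linarith [hlr, hδr, hs.1, hx.1]
      · linarith [hlr, hδr, hs.2, hx.2]
    · have h1 : |V x y s| ≤ |y| + Mh * |s - x| := by
        calc |V x y s| = |(V x y s - y) + y| := by ring_nf
          _ ≤ |V x y s - y| + |y| := abs_add_le _ _
          _ ≤ Mh * |s - x| + |y| := by linarith [hsb]
          _ = |y| + Mh * |s - x| := by ring
      have h2 : Mh * |s - x| ≤ Mh * (3 * l / 4) := by
        apply mul_le_mul_of_nonneg_left habs hMhpos.le
      calc |V x y s| ≤ |y| + Mh * (3 * l / 4) := by linarith [h1, h2]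
        _ ≤ δ + 3 * (r / 2) / 4 := by nlinarith [hMhl]
        _ ≤ r := by linarith [hδr, hr]
  -- Stage 2: the flow stays near the base point
  have hγfact : ∀ p : ℝ × ℝ, ‖p‖ ≤ δ → ∀ t : ℝ, |t| ≤ τ →
      ‖γ p t - p‖ ≤ MF * |t| ∧ γ p t ∈ S := by
    intro p hp t ht
    have hstay := stay_two (γ := γ p) (γ' := fun t => ((f (γ p t), g (γ p t)) : ℝ × ℝ))
      (t₀ := 0) (τ := τ) (M := MF) (r := r / 2) hMFpos.le hτpos.le
      (fun t _ => hγd p t)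
      (fun t _ hdist => by
        rw [hγ0] at hdist
        refine hMF _ ?_
        rw [hSdef, Metric.mem_closedBall]
        have h00' : ((0, 0) : ℝ × ℝ) = 0 := rfl
        rw [h00', dist_zero_right]
        calc ‖γ p t‖ = ‖(γ p t - p) + p‖ := by ring_nf
          _ ≤ ‖γ p t - p‖ + ‖p‖ := norm_add_le _ _
          _ ≤ r / 2 + δ := by linarith
          _ ≤ r := by linarith [hδr])
      (by nlinarith [hMFτ, hlr, hr, hlpos])
    have h1 := hstay t (by rw [mem_Icc]; rw [abs_le] at ht; constructor <;> linarith [ht.1, ht.2])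
    rw [hγ0, sub_zero] at h1
    refine ⟨h1, ?_⟩
    rw [hSdef, Metric.mem_closedBall]
    have h00' : ((0, 0) : ℝ × ℝ) = 0 := rfl
    rw [h00', dist_zero_right]
    have h2 : MF * |t| ≤ l / 4 := by
      rw [← hMFτ]
      exact mul_le_mul_of_nonneg_left ht hMFpos.le
    calc ‖γ p t‖ = ‖(γ p t - p) + p‖ := by ring_nf
      _ ≤ ‖γ p t - p‖ + ‖p‖ := norm_add_le _ _
      _ ≤ l / 4 + δ := by linarith
      _ ≤ r := by linarith [hδl, hlr, hr]
  have hXnear : ∀ p : ℝ × ℝ, ‖p‖ ≤ δ → ∀ t : ℝ, |t| ≤ τ →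
      |X t p.1 p.2 - p.1| ≤ l / 4 := by
    intro p hp t ht
    have h1 := (hγfact p hp t ht).1
    have h2 : |X t p.1 p.2 - p.1| ≤ ‖γ p t - p‖ := by
      have := norm_fst_le (γ p t - p)
      simpa [hγdef, Prod.sub_def, Real.norm_eq_abs] using this
    have h3 : MF * |t| ≤ l / 4 := by
      rw [← hMFτ]
      exact mul_le_mul_of_nonneg_left ht hMFpos.le
    linarith
  -- Stage 3: the orbit is the graph of the scalar solution
  have hlink : ∀ x y : ℝ, |x| ≤ δ → |y| ≤ δ → ∀ t : ℝ, |t| ≤ τ →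
      Y t x y = V x y (X t x y) := by
    intro x y hx hy' t ht
    have hpδ : ‖((x, y) : ℝ × ℝ)‖ ≤ δ := by
      rw [hnormpair]; exact max_le hx hy'
    have hXmem : ∀ u : ℝ, u ∈ Icc ((0:ℝ) - τ) (0 + τ) →
        X u x y ∈ Icc (x - 3 * l / 4) (x + 3 * l / 4) := by
      intro u hu
      rw [mem_Icc] at hu
      have h1 : |X u x y - x| ≤ l / 4 := hXnear (x, y) hpδ u
        (by rw [abs_le]; constructor <;> linarith [hu.1, hu.2])
      rw [abs_le] at h1
      rw [mem_Icc]
      constructor <;> linarith [h1.1, h1.2, hlpos]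
    set ρ : ℝ → ℝ := fun u => V x y (X u x y) - Y u x y with hρdef
    set ρ' : ℝ → ℝ := fun u =>
      f (X u x y, Y u x y) * (h (X u x y, V x y (X u x y)) - h (X u x y, Y u x y)) with hρ'def
    have hγmem : ∀ u : ℝ, |u| ≤ τ → ((X u x y, Y u x y) : ℝ × ℝ) ∈ S := by
      intro u hu
      exact (hγfact (x, y) hpδ u hu).2
    have hd : ∀ u ∈ Icc ((0:ℝ) - τ) (0 + τ), HasDerivAt ρ (ρ' u) u := by
      intro u hu
      have huτ : |u| ≤ τ := by
        rw [mem_Icc] at hu; rw [abs_le]; constructor <;> linarith [hu.1, hu.2]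
      have hVfx := hVfact x y hx hy' (X u x y) (hXmem u hu)
      have hcomp := (hVfx.1).comp u (hXflow u x y)
      have hder := hcomp.sub (hYflow u x y)
      have hgeq : g (X u x y, Y u x y) =
          f (X u x y, Y u x y) * h (X u x y, Y u x y) := by
        rw [hhdef]
        have hne : f (X u x y, Y u x y) ≠ 0 := hrU₀ (hγmem u huτ)
        field_simp
      have : ρ' u = h (X u x y, V x y (X u x y)) * f (X u x y, Y u x y)
          - g (X u x y, Y u x y) := by
        rw [hρ'def]
        simp only []
        rw [hgeq]
        ring
      rw [this]
      exact hder
    have hb : ∀ u ∈ Icc ((0:ℝ) - τ) (0 + τ), ‖ρ' u‖ ≤ (MF * K) * ‖ρ u‖ + 0 := by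
      intro u hu
      have huτ : |u| ≤ τ := by
        rw [mem_Icc] at hu; rw [abs_le]; constructor <;> linarith [hu.1, hu.2]
      have hVfx := hVfact x y hx hy' (X u x y) (hXmem u hu)
      have hγm := hγmem u huτ
      have hfb : |f (X u x y, Y u x y)| ≤ MF := by
        have := hMF _ hγm
        calc |f (X u x y, Y u x y)| ≤ max |f (X u x y, Y u x y)| |g (X u x y, Y u x y)| :=
            le_max_left _ _
          _ = ‖((f (X u x y, Y u x y), g (X u x y, Y u x y)) : ℝ × ℝ)‖ := by
              rw [hnormpair]
          _ ≤ MF := this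
      have hLip := hLiph (X u x y, V x y (X u x y)) hVfx.2.2 (X u x y, Y u x y) hγm
      rw [hvert] at hLip
      rw [Real.norm_eq_abs, Real.norm_eq_abs, hρ'def, hρdef, add_zero]
      simp only []
      rw [abs_mul]
      calc |f (X u x y, Y u x y)| * |h (X u x y, V x y (X u x y)) - h (X u x y, Y u x y)|
          ≤ MF * (K * |V x y (X u x y) - Y u x y|) := by
            apply mul_le_mul hfb hLip (abs_nonneg _) hMFpos.le
        _ = MF * K * |V x y (X u x y) - Y u x y| := by ring
    have h0 : ‖ρ 0‖ ≤ 0 := by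
      rw [hρdef]
      simp only []
      rw [hX0, hY0, (hV x y hx hy').1]
      simp
    have hgr := gronwall_two hτpos.le hd h0 hb t
      (by rw [mem_Icc]; rw [abs_le] at ht; constructor <;> linarith [ht.1, ht.2])
    rw [gronwallBound_ε0_δ0] at hgr
    have : ρ t = 0 := by
      have := norm_le_zero_iff.1 (le_trans hgr (le_refl 0))
      exact this
    rw [hρdef] at this
    simp only [] at this
    linarith [this]
  -- Stage 4: formula for the transversal map
  have hP : ∀ x y : ℝ, |x| ≤ δ → |y| ≤ δ → Y (T (x, y)) x y = V x y (-x) := by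
    intro x y hx hy'
    have hpδ : ‖((x, y) : ℝ × ℝ)‖ ≤ δ := by
      rw [hnormpair]; exact max_le hx hy'
    obtain ⟨hpU, hpT⟩ := hδU (x, y) hpδ
    have h1 := hlink x y hx hy' (T (x, y)) hpT
    have h2 := hTX (x, y) hpU
    simp only [] at h2
    rw [h1, h2]
  -- Stage 5: derivative of the transversal map in the second variable
  have hstage5 : ∀ x : ℝ, |x| ≤ δ →
      deriv (fun y => Y (T (x, y)) x y) 0 =
        Real.exp (∫ σ in x..(-x), hy (σ, V x 0 σ)) := by
    intro x hx
    have h0δ : |(0 : ℝ)| ≤ δ := by rw [abs_zero]; exact hδpos.le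
    set q : ℝ → ℝ := fun σ => hy (σ, V x 0 σ) with hqdef
    set w : ℝ → ℝ := fun s => Real.exp (∫ σ in x..s, q σ) with hwdef
    set O : Set ℝ := Ioo (x - 3 * l / 4) (x + 3 * l / 4) with hOdef
    have hOopen : IsOpen O := isOpen_Ioo
    have hsubO : Icc (x - l / 2) (x + l / 2) ⊆ O := by
      intro σ hσ
      rw [mem_Icc] at hσ
      rw [hOdef, mem_Ioo]
      constructor <;> [linarith [hσ.1, hlpos]; linarith [hσ.2, hlpos]]
    have hOI : ∀ s ∈ O, s ∈ Icc (x - 3 * l / 4) (x + 3 * l / 4) := by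
      intro s hs
      rw [hOdef, mem_Ioo] at hs
      rw [mem_Icc]
      exact ⟨hs.1.le, hs.2.le⟩
    have hqcont : ∀ s ∈ O, ContinuousAt q s := by
      intro s hs
      have hVf := hVfact x 0 hx h0δ s (hOI s hs)
      have hVc : ContinuousAt (V x 0) s := hVf.1.continuousAt
      have hyc : ContinuousAt hy (s, V x 0 s) :=
        hycont.continuousAt (hU₀open.mem_nhds (hrU₀ hVf.2.2))
      have hpc : ContinuousAt (fun σ : ℝ => ((σ, V x 0 σ) : ℝ × ℝ)) s :=
        continuousAt_id.prodMk hVc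
      exact ContinuousAt.comp (f := fun σ : ℝ => ((σ, V x 0 σ) : ℝ × ℝ)) hyc hpc
    have hqint : ∀ s ∈ O, IntervalIntegrable q volume x s := by
      intro s hs
      apply ContinuousOn.intervalIntegrable
      intro σ hσ
      have hσO : σ ∈ O := by
        rw [hOdef, mem_Ioo]
        rw [hOdef, mem_Ioo] at hs
        rcases le_total x s with hc | hc
        · rw [uIcc_of_le hc, mem_Icc] at hσ
          constructor <;> [linarith [hσ.1, hlpos]; linarith [hσ.2, hs.2]]
        · rw [uIcc_of_ge hc, mem_Icc] at hσ
          constructor <;> [linarith [hσ.1, hs.1]; linarith [hσ.2, hlpos]]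
      exact (hqcont σ hσO).continuousWithinAt
    have hwd : ∀ s ∈ O, HasDerivAt w (q s * w s) s := by
      intro s hs
      have hI := intervalIntegral.integral_hasDerivAt_right (hqint s hs)
        (ContinuousAt.stronglyMeasurableAtFilter hOopen hqcont s hs) (hqcont s hs)
      have := hI.exp
      rw [hwdef]
      simp only []
      convert this using 1
      ring
    have hwx : w x = 1 := by
      rw [hwdef]
      simp only []
      rw [intervalIntegral.integral_same, Real.exp_zero]
    -- the quadratic-error derivative bound
    set C₁ : ℝ := Real.exp (K * l) with hC₁def
    have hC₁pos : 0 < C₁ := Real.exp_pos _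
    set C₃ : ℝ := L * C₁ ^ 2 * (l * Real.exp (K * l)) with hC₃def
    have hC₃pos : 0 < C₃ := by positivity
    have hIccO : ∀ s ∈ Icc (x - l / 2) (x + l / 2), s ∈ O := fun s hs => hsubO hs
    have hxmem : ∀ s : ℝ, s ∈ Icc (x - l / 2) (x + l / 2) →
        s ∈ Icc (x - 3 * l / 4) (x + 3 * l / 4) := fun s hs => hOI s (hsubO hs)
    have hxI : -x ∈ Icc (x - l / 2) (x + l / 2) := by
      rw [mem_Icc]
      rw [abs_le] at hx
      constructor <;> [linarith [hx.2, hδl]; linarith [hx.1, hδl]]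
    have hkey : ∀ ε : ℝ, |ε| ≤ δ →
        |V x ε (-x) - V x 0 (-x) - ε * w (-x)| ≤ C₃ * ε ^ 2 := by
      intro ε hε
      -- first Grönwall: distance between the two scalar solutions
      have hdd : ∀ s ∈ Icc (x - l / 2) (x + l / 2), |V x ε s - V x 0 s| ≤ |ε| * C₁ := by
        have hgr := gronwall_two (t₀ := x) (τ := l / 2) (K := K) (ε := 0) (δ := |ε|)
          (z := fun s => V x ε s - V x 0 s)
          (z' := fun s => h (s, V x ε s) - h (s, V x 0 s))
          (by positivity)
          (fun s hs => ((hVfact x ε hx hε s (hxmem s hs)).1).sub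
            ((hVfact x 0 hx h0δ s (hxmem s hs)).1))
          (by
            show ‖V x ε x - V x 0 x‖ ≤ |ε|
            rw [Real.norm_eq_abs, (hV x ε hx hε).1, (hV x 0 hx h0δ).1, sub_zero])
          (fun s hs => by
            have hLip := hLiph (s, V x ε s) (hVfact x ε hx hε s (hxmem s hs)).2.2
              (s, V x 0 s) (hVfact x 0 hx h0δ s (hxmem s hs)).2.2
            rw [hvert] at hLip
            show ‖h (s, V x ε s) - h (s, V x 0 s)‖ ≤ K * ‖V x ε s - V x 0 s‖ + 0
            rw [Real.norm_eq_abs, Real.norm_eq_abs, add_zero]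
            exact hLip)
        intro s hs
        have := hgr s hs
        rw [show ‖(fun s => V x ε s - V x 0 s) s‖ = |V x ε s - V x 0 s| from rfl,
          gronwallBound_ε0] at this
        refine le_trans this ?_
        apply mul_le_mul_of_nonneg_left _ (abs_nonneg ε)
        rw [hC₁def]
        apply Real.exp_le_exp.2
        have h1 : |s - x| ≤ l / 2 := by
          rw [mem_Icc] at hs
          rw [abs_le]; constructor <;> linarith [hs.1, hs.2]
        nlinarith [hKpos, h1, abs_nonneg (s - x), hlpos]
      -- second Grönwall: quadratic error
      set z : ℝ → ℝ := fun s => V x ε s - V x 0 s - ε * w s with hzdef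
      set R : ℝ → ℝ := fun s =>
        h (s, V x ε s) - h (s, V x 0 s) - hy (s, V x 0 s) * (V x ε s - V x 0 s) with hRdef
      set z' : ℝ → ℝ := fun s => hy (s, V x 0 s) * z s + R s with hz'def
      have hzd : ∀ s ∈ Icc (x - l / 2) (x + l / 2), HasDerivAt z (z' s) s := by
        intro s hs
        have h1 := ((hVfact x ε hx hε s (hxmem s hs)).1).sub
          ((hVfact x 0 hx h0δ s (hxmem s hs)).1)
        have h2 := (hwd s (hIccO s hs)).const_mul ε
        have h3 := h1.sub h2
        have : z' s = h (s, V x ε s) - h (s, V x 0 s) - ε * (q s * w s) := by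
          rw [hz'def, hRdef, hzdef, hqdef]
          simp only []
          ring
        rw [this]
        exact h3
      have hzb : ∀ s ∈ Icc (x - l / 2) (x + l / 2),
          ‖z' s‖ ≤ K * ‖z s‖ + L * (|ε| * C₁) ^ 2 := by
        intro s hs
        have hTay := hTaylor s (V x 0 s) (V x ε s)
          (hVfact x 0 hx h0δ s (hxmem s hs)).2.2 (hVfact x ε hx hε s (hxmem s hs)).2.2
        have hqb : |hy (s, V x 0 s)| ≤ K := hyK _ (hVfact x 0 hx h0δ s (hxmem s hs)).2.2
        have hsq : |V x ε s - V x 0 s| ^ 2 ≤ (|ε| * C₁) ^ 2 := by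
          apply pow_le_pow_left₀ (abs_nonneg _) (hdd s hs)
        have hRb : |R s| ≤ L * (|ε| * C₁) ^ 2 := by
          rw [hRdef]
          simp only []
          refine le_trans hTay ?_
          apply mul_le_mul_of_nonneg_left hsq hLpos.le
        rw [hz'def]
        simp only []
        rw [Real.norm_eq_abs, Real.norm_eq_abs]
        calc |hy (s, V x 0 s) * z s + R s| ≤ |hy (s, V x 0 s) * z s| + |R s| := abs_add_le _ _
          _ = |hy (s, V x 0 s)| * |z s| + |R s| := by rw [abs_mul]
          _ ≤ K * |z s| + L * (|ε| * C₁) ^ 2 := by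
              refine add_le_add (mul_le_mul_of_nonneg_right hqb (abs_nonneg _)) hRb
      have hz0 : ‖z x‖ ≤ 0 := by
        show ‖V x ε x - V x 0 x - ε * w x‖ ≤ 0
        rw [(hV x ε hx hε).1, (hV x 0 hx h0δ).1, hwx]
        simp
      have hgr2 := gronwall_two (t₀ := x) (τ := l / 2) (K := K)
        (ε := L * (|ε| * C₁) ^ 2) (δ := 0) (z := z) (z' := z')
        (by positivity) hzd hz0 hzb (-x) hxI
      have hgb : gronwallBound 0 K (L * (|ε| * C₁) ^ 2) |(-x) - x| ≤
          (L * (|ε| * C₁) ^ 2) * (l * Real.exp (K * l)) := by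
        apply gronwallBound_zero_le hKpos.le (by positivity) (abs_nonneg _)
        rw [show -x - x = -(2 * x) by ring, abs_neg, abs_mul]
        rw [show |(2:ℝ)| = 2 by norm_num]
        linarith [hδl, hx, hlpos]
      have : ‖z (-x)‖ ≤ C₃ * ε ^ 2 := by
        refine le_trans hgr2 (le_trans hgb ?_)
        rw [hC₃def]
        have : L * (|ε| * C₁) ^ 2 * (l * Real.exp (K * l))
            = L * C₁ ^ 2 * (l * Real.exp (K * l)) * |ε| ^ 2 := by ring
        rw [this, sq_abs]
      rw [hzdef] at this
      exact this
    -- conclude the inner derivative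
    have hder : HasDerivAt (fun yy => Y (T (x, yy)) x yy) (w (-x)) 0 := by
      apply hasDerivAt_of_sq_bound (C := C₃) hC₃pos.le
      have hball : ∀ᶠ ε : ℝ in nhds 0, |ε| ≤ δ := by
        have := Metric.closedBall_mem_nhds (0 : ℝ) hδpos
        filter_upwards [this] with ε hε
        rw [Metric.mem_closedBall, Real.dist_eq, sub_zero] at hε
        exact hε
      filter_upwards [hball] with ε hε
      have h1 := hP x ε hx hε
      have h2 := hP x 0 hx h0δ
      rw [h1, h2, sub_zero]
      exact hkey ε hε
    rw [hder.deriv]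
  -- Stage 6/7: outer derivative
  have hQder : HasDerivAt (fun x => ∫ σ in x..(-x), hy (σ, V x 0 σ)) (-2 * hy (0, 0)) 0 := by
    rw [hasDerivAt_iff_isLittleO, Asymptotics.isLittleO_iff]
    intro c hc
    obtain ⟨ρ, hρpos, hρ⟩ := Metric.continuousAt_iff.1
      (hycont.continuousAt (hU₀open.mem_nhds h00)) (c / 2) (by positivity)
    have h0δ : |(0 : ℝ)| ≤ δ := by rw [abs_zero]; exact hδpos.le
    have hball : ∀ᶠ x : ℝ in nhds 0, |x| ≤ min δ (ρ / (2 * Mh + 2)) := by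
      have := Metric.closedBall_mem_nhds (0 : ℝ)
        (lt_min hδpos (by positivity) : (0:ℝ) < min δ (ρ / (2 * Mh + 2)))
      filter_upwards [this] with ε hε
      rw [Metric.mem_closedBall, Real.dist_eq, sub_zero] at hε
      exact hε
    filter_upwards [hball] with x hx
    have hxδ : |x| ≤ δ := le_trans hx (min_le_left _ _)
    have hxρ : |x| ≤ ρ / (2 * Mh + 2) := le_trans hx (min_le_right _ _)
    -- pointwise bound on the integrand
    have hmemI : ∀ σ ∈ uIcc x (-x), σ ∈ Icc (x - 3 * l / 4) (x + 3 * l / 4) := by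
      intro σ hσ
      have h2x : |(-x) - x| ≤ l / 4 := by
        rw [show -x - x = -(2 * x) by ring, abs_neg, abs_mul,
          show |(2:ℝ)| = 2 by norm_num]
        linarith [hδl, hxδ]
      rw [mem_Icc]
      rw [abs_le] at h2x
      rcases le_total x (-x) with hc' | hc'
      · rw [uIcc_of_le hc', mem_Icc] at hσ
        constructor <;> [linarith [hσ.1, hlpos]; linarith [hσ.2, h2x.2, hlpos]]
      · rw [uIcc_of_ge hc', mem_Icc] at hσ
        constructor <;> [linarith [hσ.1, h2x.1, hlpos]; linarith [hσ.2, hlpos]]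
    have hbound : ∀ σ ∈ uIcc x (-x), |hy (σ, V x 0 σ) - hy (0, 0)| ≤ c / 2 := by
      intro σ hσ
      have hσI := hmemI σ hσ
      have hVb := (hVfact x 0 hxδ h0δ σ hσI).2.1
      rw [sub_zero] at hVb
      have hσx : |σ| ≤ |x| := by
        rcases le_total x (-x) with hc' | hc'
        · rw [uIcc_of_le hc', mem_Icc] at hσ
          rw [abs_le]
          constructor
          · exact le_trans (neg_abs_le x) hσ.1
          · exact le_trans hσ.2 (neg_le_abs x)
        · rw [uIcc_of_ge hc', mem_Icc] at hσ
          rw [abs_le]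
          constructor
          · exact le_trans (neg_le_neg (le_abs_self x)) hσ.1
          · exact le_trans hσ.2 (le_abs_self x)
      have hσmx : |σ - x| ≤ 2 * |x| := by
        calc |σ - x| ≤ |σ| + |x| := abs_sub _ _
          _ ≤ 2 * |x| := by linarith [hσx]
      have hVsmall : |V x 0 σ| ≤ 2 * Mh * |x| :=
        le_trans hVb (by nlinarith [hMhpos, hσmx, abs_nonneg (σ - x)])
      have hdist : dist ((σ, V x 0 σ) : ℝ × ℝ) ((0, 0) : ℝ × ℝ) < ρ := by
        rw [Prod.dist_eq]
        rw [Real.dist_eq, Real.dist_eq, sub_zero, sub_zero]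
        apply max_lt
        · calc |σ| ≤ |x| := hσx
            _ ≤ ρ / (2 * Mh + 2) := hxρ
            _ < ρ := by
                rw [div_lt_iff₀ (by positivity)]
                nlinarith [hρpos, hMhpos]
        · calc |V x 0 σ| ≤ 2 * Mh * |x| := hVsmall
            _ ≤ 2 * Mh * (ρ / (2 * Mh + 2)) := by
                apply mul_le_mul_of_nonneg_left hxρ (by positivity)
            _ < ρ := by
                rw [mul_div_assoc', div_lt_iff₀ (by positivity : (0:ℝ) < 2 * Mh + 2)]
                nlinarith [hρpos, hMhpos]
      have := hρ hdist
      rw [Real.dist_eq] at this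
      exact this.le
    -- integrability
    have hqi : IntervalIntegrable (fun σ => hy (σ, V x 0 σ)) volume x (-x) := by
      apply ContinuousOn.intervalIntegrable
      intro σ hσ
      have hσI := hmemI σ hσ
      have hVf := hVfact x 0 hxδ h0δ σ hσI
      have hVc : ContinuousAt (V x 0) σ := hVf.1.continuousAt
      have hyc : ContinuousAt hy (σ, V x 0 σ) :=
        hycont.continuousAt (hU₀open.mem_nhds (hrU₀ hVf.2.2))
      exact (ContinuousAt.comp (f := fun σ : ℝ => ((σ, V x 0 σ) : ℝ × ℝ)) hyc
        (continuousAt_id.prodMk hVc)).continuousWithinAt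
    have hsplit : (∫ σ in x..(-x), hy (σ, V x 0 σ)) - ((-x) - x) * hy (0, 0)
        = ∫ σ in x..(-x), (hy (σ, V x 0 σ) - hy (0, 0)) := by
      rw [intervalIntegral.integral_sub hqi intervalIntegrable_const,
        intervalIntegral.integral_const, smul_eq_mul]
    have hnorm : ‖∫ σ in x..(-x), (hy (σ, V x 0 σ) - hy (0, 0))‖ ≤ (c / 2) * |(-x) - x| := by
      apply intervalIntegral.norm_integral_le_of_norm_le_const
      intro σ hσ
      rw [Real.norm_eq_abs]
      exact hbound σ (Set.Ioc_subset_Icc_self hσ)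
    have hQ0 : (∫ σ in (0:ℝ)..(-0), hy (σ, V 0 0 σ)) = 0 := by
      rw [neg_zero, intervalIntegral.integral_same]
    show ‖(∫ σ in x..(-x), hy (σ, V x 0 σ)) - (∫ σ in (0:ℝ)..(-0), hy (σ, V 0 0 σ))
        - (x - 0) • (-2 * hy (0, 0))‖ ≤ c * ‖x - 0‖
    rw [hQ0, sub_zero, smul_eq_mul, sub_zero]
    have heq2 : (∫ σ in x..(-x), hy (σ, V x 0 σ)) - x * (-2 * hy (0, 0))
        = (∫ σ in x..(-x), hy (σ, V x 0 σ)) - ((-x) - x) * hy (0, 0) := by ring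
    rw [heq2, hsplit]
    refine le_trans hnorm ?_
    rw [Real.norm_eq_abs,
      show -x - x = -(2 * x) by ring, abs_neg, abs_mul,
      show |(2:ℝ)| = 2 by norm_num]
    exact le_of_eq (by ring)
  -- assemble the outer derivative
  have hballδ : ∀ᶠ x : ℝ in nhds 0, |x| ≤ δ := by
    filter_upwards [Metric.closedBall_mem_nhds (0 : ℝ) hδpos] with ε hε
    rw [Metric.mem_closedBall, Real.dist_eq, sub_zero] at hε
    exact hε
  have hev : (fun x => deriv (fun y => Y (T (x, y)) x y) 0)
      =ᶠ[nhds 0] fun x => Real.exp (∫ σ in x..(-x), hy (σ, V x 0 σ)) := by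
    filter_upwards [hballδ] with x hx
    exact hstage5 x hx
  have hlhs : deriv (fun x => deriv (fun y => Y (T (x, y)) x y) 0) 0 = -2 * hy (0, 0) := by
    rw [hev.deriv_eq]
    have h1 := hQder.exp
    have hQ0 : (∫ σ in (0:ℝ)..(-0), hy (σ, V 0 0 σ)) = 0 := by
      rw [neg_zero, intervalIntegral.integral_same]
    rw [hQ0, Real.exp_zero, one_mul] at h1
    exact h1.deriv
  -- identify hy (0,0) with the stated quotient derivative
  have hpart00 : HasDerivAt (fun u => h (0, u)) (hy (0, 0)) 0 := by
    have := hpart (0, 0) h00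
    exact this
  have hdg : DifferentiableAt ℝ (fun u : ℝ => g (0, u)) 0 := by
    have hgd : DifferentiableAt ℝ g ((0, 0) : ℝ × ℝ) := (hg.differentiable (by norm_num)) (0, 0)
    have hline : DifferentiableAt ℝ (fun u : ℝ => ((0, u) : ℝ × ℝ)) 0 :=
      (differentiableAt_const _).prodMk differentiableAt_id
    exact DifferentiableAt.comp 0 hgd hline
  have hdf : DifferentiableAt ℝ (fun u : ℝ => f (0, u)) 0 := by
    have hfd : DifferentiableAt ℝ f ((0, 0) : ℝ × ℝ) := (hf.differentiable (by norm_num)) (0, 0)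
    have hline : DifferentiableAt ℝ (fun u : ℝ => ((0, u) : ℝ × ℝ)) 0 :=
      (differentiableAt_const _).prodMk differentiableAt_id
    exact DifferentiableAt.comp 0 hfd hline
  have h2 : deriv (fun u : ℝ => h (0, u)) 0 =
      (deriv (fun u : ℝ => g (0, u)) 0 * f (0, 0)
        - g (0, 0) * deriv (fun u : ℝ => f (0, u)) 0) / f (0, 0) ^ 2 := by
    have hfun : (fun u : ℝ => h (0, u)) = fun u : ℝ => g (0, u) / f (0, u) := by
      rw [hhdef]
    rw [hfun]
    exact deriv_div hdg hdf hf0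
  rw [hpart00.deriv] at h2
  rw [hlhs, h2]
  have hf0' : f (0 : ℝ × ℝ) ≠ 0 := hf0
  field_simp [hf0']
  ring
end

section
/- In the setting of the main theorem, the period of the bifurcating limit cycle satisfies T(x̄) = (-2/f⁺(0,0) + 2/f⁻(0,0)) x̄ + O(x̄²), where T(x̄) = T⁺(x̄, y(x̄)) + T⁻(-x̄, P⁺_{x̄}(y(x̄))) is the sum of the crossing times of the two subsystems; in particular, since f⁻(0,0) > 0 > f⁺(0,0), both crossing times are positive for small x̄ > 0. -/
open Set


lemma stay_pos (F V : ℝ → ℝ × ℝ)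
    (hF : ∀ s, HasDerivAt F (V s) s)
    (M r t : ℝ) (hM : 0 ≤ M) (hr : 0 < r) (ht : 0 ≤ t) (htr : M * t < r)
    (hV : ∀ s ∈ Set.Icc 0 t, ‖F s - F 0‖ ≤ r → ‖V s‖ ≤ M) :
    ∀ s ∈ Set.Icc 0 t, ‖F s - F 0‖ ≤ M * s := by
  have hFc : Continuous F := by
    rw [continuous_iff_continuousAt]; exact fun s => (hF s).continuousAt
  have hnc : Continuous (fun s => ‖F s - F 0‖) := (hFc.sub continuous_const).norm
  have key : ∀ s ∈ Set.Icc 0 t, ‖F s - F 0‖ ≤ r := by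
    by_contra h
    push_neg at h
    obtain ⟨s₁, hs₁, hs₁r⟩ := h
    set B : Set ℝ := {s | s ∈ Set.Icc 0 t ∧ r < ‖F s - F 0‖} with hB
    have hBne : B.Nonempty := ⟨s₁, hs₁, hs₁r⟩
    have hBbdd : BddBelow B := ⟨0, fun s hs => hs.1.1⟩
    set s₀ := sInf B with hs₀
    have hs₀cl : s₀ ∈ closure B := csInf_mem_closure hBne hBbdd
    have hcl1 : closure B ⊆ {s | r ≤ ‖F s - F 0‖} ∩ Set.Icc 0 t := by
      apply closure_minimal
      · intro s hs; exact ⟨le_of_lt hs.2, hs.1⟩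
      · exact (isClosed_le continuous_const hnc).inter isClosed_Icc
    have hge : r ≤ ‖F s₀ - F 0‖ := (hcl1 hs₀cl).1
    have hs₀Icc : s₀ ∈ Set.Icc 0 t := (hcl1 hs₀cl).2
    have hlt : ∀ u, 0 ≤ u → u < s₀ → ‖F u - F 0‖ ≤ r := by
      intro u hu hus
      by_contra hc
      push_neg at hc
      exact absurd (csInf_le hBbdd ⟨⟨hu, le_trans hus.le hs₀Icc.2⟩, hc⟩) (not_le.mpr hus)
    have hs₀pos : 0 < s₀ := by
      rcases lt_or_eq_of_le hs₀Icc.1 with h | h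
      · exact h
      · exfalso; rw [← h] at hge; simp at hge; linarith
    have hle : ‖F s₀ - F 0‖ ≤ r := by
      have hcont : ContinuousWithinAt (fun s => ‖F s - F 0‖) (Set.Iio s₀) s₀ :=
        hnc.continuousAt.continuousWithinAt
      apply le_of_tendsto hcont.tendsto
      filter_upwards [Ioo_mem_nhdsLT_of_mem (⟨hs₀pos, le_refl s₀⟩ : s₀ ∈ Set.Ioc 0 s₀)] with u hu
      exact hlt u hu.1.le hu.2
    have hbound : ∀ u ∈ Set.Ico 0 s₀, ‖V u‖ ≤ M := by
      intro u hu
      exact hV u ⟨hu.1, le_trans hu.2.le hs₀Icc.2⟩ (hlt u hu.1 hu.2)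
    have h1 := norm_image_sub_le_of_norm_deriv_le_segment'
      (f := F) (f' := V) (fun u _ => (hF u).hasDerivWithinAt) hbound s₀
      (Set.right_mem_Icc.mpr hs₀pos.le)
    have h2 : M * (s₀ - 0) ≤ M * t := by
      have := hs₀Icc.2; nlinarith
    linarith
  have hbound : ∀ u ∈ Set.Ico 0 t, ‖V u‖ ≤ M := fun u hu =>
    hV u ⟨hu.1, hu.2.le⟩ (key u ⟨hu.1, hu.2.le⟩)
  intro s hs
  have := norm_image_sub_le_of_norm_deriv_le_segment'
    (f := F) (f' := V) (fun u _ => (hF u).hasDerivWithinAt) hbound s hs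
  simpa using this

lemma stay (F V : ℝ → ℝ × ℝ) (hF : ∀ s, HasDerivAt F (V s) s)
    (M r t : ℝ) (hM : 0 ≤ M) (hr : 0 < r) (htr : M * |t| < r)
    (hV : ∀ s ∈ Set.uIcc 0 t, ‖F s - F 0‖ ≤ r → ‖V s‖ ≤ M) :
    ∀ s ∈ Set.uIcc 0 t, ‖F s - F 0‖ ≤ M * |t| := by
  rcases le_total 0 t with h | h
  · rw [Set.uIcc_of_le h] at *
    intro s hs
    have h1 := stay_pos F V hF M r t hM hr h (by rwa [abs_of_nonneg h] at htr) hV s hs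
    have : M * s ≤ M * |t| := by
      rw [abs_of_nonneg h]; exact mul_le_mul_of_nonneg_left hs.2 hM
    linarith
  · rw [Set.uIcc_of_ge h] at *
    set G : ℝ → ℝ × ℝ := fun u => F (-u) with hGdef
    set W : ℝ → ℝ × ℝ := fun u => -V (-u) with hWdef
    have hG : ∀ s, HasDerivAt G (W s) s := by
      intro s
      have := (hF (-s)).scomp s (hasDerivAt_neg s)
      simpa [hGdef, hWdef, Function.comp_def] using this
    have hG0 : G 0 = F 0 := by simp [hGdef]
    have hV' : ∀ s ∈ Set.Icc 0 (-t), ‖G s - G 0‖ ≤ r → ‖W s‖ ≤ M := by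
      intro s hs hsr
      have hmem : -s ∈ Set.Icc t 0 := ⟨by linarith [hs.2], by linarith [hs.1]⟩
      have := hV (-s) hmem (by rwa [hG0] at hsr)
      simpa [hWdef] using this
    have hres := stay_pos G W hG M r (-t) hM hr (by linarith)
      (by rwa [abs_of_nonpos h] at htr) hV'
    intro s hs
    have hmem : -s ∈ Set.Icc 0 (-t) := ⟨by linarith [hs.2], by linarith [hs.1]⟩
    have := hres (-s) hmem
    rw [hG0] at this
    have h2 : G (-s) = F s := by simp [hGdef]
    rw [h2] at this
    have : M * -s ≤ M * |t| := by
      rw [abs_of_nonpos h]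
      exact mul_le_mul_of_nonneg_left (by linarith [hs.1]) hM
    linarith

set_option maxHeartbeats 2000000 in
lemma crossing_est (f g : ℝ × ℝ → ℝ) (hf : ContDiff ℝ 4 f) (hg : ContDiff ℝ 4 g)
    (hf0 : f (0, 0) ≠ 0)
    (X Y : ℝ → ℝ → ℝ → ℝ)
    (hX0 : ∀ x y, X 0 x y = x) (hY0 : ∀ x y, Y 0 x y = y)
    (hXf : ∀ t x y, HasDerivAt (fun s => X s x y) (f (X t x y, Y t x y)) t)
    (hYf : ∀ t x y, HasDerivAt (fun s => Y s x y) (g (X t x y, Y t x y)) t)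
    (T : ℝ × ℝ → ℝ) (hT0 : T (0, 0) = 0)
    (hT : ∃ U ∈ nhds ((0, 0) : ℝ × ℝ), ContDiffOn ℝ 3 T U ∧ ∀ p ∈ U, X (T p) p.1 p.2 = -p.1) :
    ∃ C > 0, ∃ δ > 0, ∀ x y : ℝ, ‖((x, y) : ℝ × ℝ)‖ < δ → f (0, 0) * x < 0 →
      0 < T (x, y) ∧ |T (x, y) + 2 * x / f (0, 0)| ≤ C * ‖((x, y) : ℝ × ℝ)‖ ^ 2 ∧
      |Y (T (x, y)) x y - y| ≤ C * ‖((x, y) : ℝ × ℝ)‖ := by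
  obtain ⟨U, hU, hTc, hTX⟩ := hT
  set a := f (0, 0) with ha
  have hA : 0 < |a| := abs_pos.mpr hf0
  -- Lipschitz constant near the origin
  obtain ⟨L, t₀, ht₀, hLip⟩ :=
    (hf.contDiffAt (x := ((0, 0) : ℝ × ℝ))).of_le (by norm_num) |>.exists_lipschitzOnWith
  obtain ⟨r1, hr1, hball1⟩ := Metric.mem_nhds_iff.mp ht₀
  -- continuity bound |f z - a| ≤ |a|/2
  have hcf : ContinuousAt f (0, 0) := hf.continuous.continuousAt
  obtain ⟨r2, hr2, hball2⟩ := Metric.continuousAt_iff.mp hcf (|a| / 2) (by linarith)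
  set r := min r1 r2 / 4 with hrdef
  have hr : 0 < r := by
    have := lt_min hr1 hr2; positivity
  have h2r1 : 2 * r < r1 := by
    have h1 : min r1 r2 ≤ r1 := min_le_left _ _
    have := lt_min hr1 hr2
    simp only [hrdef]; linarith
  have h2r2 : 2 * r < r2 := by
    have h1 : min r1 r2 ≤ r2 := min_le_right _ _
    have := lt_min hr1 hr2
    simp only [hrdef]; linarith
  -- bound on the vector field on the closed ball
  obtain ⟨M0, hM0⟩ := (isCompact_closedBall ((0, 0) : ℝ × ℝ) (2 * r)).exists_bound_of_continuousOn
    ((hf.continuous.prodMk hg.continuous).continuousOn)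
  set M := max M0 0 with hMdef
  have hM : 0 ≤ M := le_max_right _ _
  set τ := r / (M + 1) with hτ
  have hτpos : 0 < τ := by positivity
  -- smallness of T near the origin
  have hTcont : ContinuousAt T (0, 0) := hTc.continuousOn.continuousAt hU
  have hev : ∀ᶠ p in nhds ((0, 0) : ℝ × ℝ), |T p| < τ ∧ p ∈ U := by
    have h1 : ∀ᶠ p in nhds ((0, 0) : ℝ × ℝ), |T p| < τ := by
      have h2 : Filter.Tendsto T (nhds ((0, 0) : ℝ × ℝ)) (nhds 0) := by
        have := hTcont.tendsto; rwa [hT0] at this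
      have h3 := h2 (Metric.ball_mem_nhds 0 hτpos)
      filter_upwards [h3] with p hp
      simpa [Real.dist_eq] using hp
    exact h1.and (Filter.eventually_of_mem hU (fun p hp => hp))
  obtain ⟨δ0, hδ0, hδ0p⟩ := Metric.eventually_nhds_iff.mp hev
  set C1 : ℝ := 4 * (L : ℝ) * (4 * M + |a|) / |a| ^ 3 with hC1
  have hC1nn : 0 ≤ C1 := by positivity
  refine ⟨C1 + 4 * M / |a| + 1, by positivity, min δ0 r, lt_min hδ0 hr, ?_⟩
  intro x y hxy hsign
  set p : ℝ × ℝ := (x, y) with hpdef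
  set N := ‖p‖ with hNdef
  have hNx : |x| ≤ N := by
    have := norm_fst_le p
    rw [← Real.norm_eq_abs]; exact this
  have hN0 : 0 ≤ N := norm_nonneg _
  have hdistp : dist p ((0, 0) : ℝ × ℝ) = N := by
    have : ((0, 0) : ℝ × ℝ) = 0 := rfl
    rw [this, dist_zero_right]
  have hNδ0 : N < δ0 := lt_of_lt_of_le hxy (min_le_left _ _)
  have hNr : N < r := lt_of_lt_of_le hxy (min_le_right _ _)
  obtain ⟨hTτ, hpU⟩ := hδ0p (by rwa [hdistp])
  set t := T p with htdef
  set F : ℝ → ℝ × ℝ := fun s => (X s x y, Y s x y) with hFdef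
  set V : ℝ → ℝ × ℝ := fun s => (f (F s), g (F s)) with hVdef
  have hF : ∀ s, HasDerivAt F (V s) s := fun s => (hXf s x y).prodMk (hYf s x y)
  have hF0 : F 0 = p := by simp [hFdef, hX0, hY0, hpdef]
  have hMtr : M * |t| < r := by
    have h1 : M * |t| ≤ M * τ := mul_le_mul_of_nonneg_left hTτ.le hM
    have h2 : M * τ < r := by
      rw [hτ, mul_div_assoc'] at *
      rw [div_lt_iff₀ (by linarith : (0:ℝ) < M + 1)]
      nlinarith
    linarith
  have hstay : ∀ s ∈ Set.uIcc 0 t, ‖F s - F 0‖ ≤ M * |t| := by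
    apply stay F V hF M r t hM hr hMtr
    intro s _ hsr
    have hFs : ‖F s‖ ≤ 2 * r := by
      have h1 : F s = (F s - F 0) + F 0 := by abel
      calc ‖F s‖ = ‖(F s - F 0) + F 0‖ := by rw [← h1]
        _ ≤ ‖F s - F 0‖ + ‖F 0‖ := norm_add_le _ _
        _ ≤ r + r := by
            refine add_le_add hsr ?_
            rw [hF0]; exact hNr.le
        _ = 2 * r := by ring
    have hmem : F s ∈ Metric.closedBall ((0, 0) : ℝ × ℝ) (2 * r) := by
      have h0 : ((0, 0) : ℝ × ℝ) = 0 := rfl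
      simpa [Metric.mem_closedBall, h0, dist_zero_right] using hFs
    have hMb := hM0 _ hmem
    calc ‖V s‖ = ‖(f (F s), g (F s))‖ := rfl
      _ ≤ M0 := hMb
      _ ≤ M := le_max_left _ _
  have hcross : X t x y = -x := hTX p hpU
  -- t ≠ 0 since x ≠ 0
  have hxne : x ≠ 0 := by
    intro h; rw [h, mul_zero] at hsign; exact lt_irrefl 0 hsign
  have ht0 : t ≠ 0 := by
    intro h
    rw [h] at hcross
    rw [hX0] at hcross
    apply hxne
    linarith
  -- MVT
  have hφc : Continuous (fun s => X s x y) := by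
    rw [continuous_iff_continuousAt]; exact fun u => (hXf u x y).continuousAt
  obtain ⟨ξ, hξmem, hξ⟩ : ∃ ξ ∈ Set.uIcc 0 t, f (F ξ) * t = -2 * x := by
    rcases lt_or_gt_of_ne ht0 with h | h
    · obtain ⟨c, hc, hceq⟩ := exists_hasDerivAt_eq_slope (fun s => X s x y)
        (fun s => f (F s)) h (hφc.continuousOn) (fun u _ => hXf u x y)
      refine ⟨c, ?_, ?_⟩
      · rw [Set.uIcc_of_ge h.le]; exact Set.Ioo_subset_Icc_self hc
      · simp only [hX0, hcross] at hceq
        rw [hceq]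
        field_simp [ht0]
        try ring
    · obtain ⟨c, hc, hceq⟩ := exists_hasDerivAt_eq_slope (fun s => X s x y)
        (fun s => f (F s)) h (hφc.continuousOn) (fun u _ => hXf u x y)
      refine ⟨c, ?_, ?_⟩
      · rw [Set.uIcc_of_le h.le]; exact Set.Ioo_subset_Icc_self hc
      · simp only [hX0, hcross] at hceq
        rw [hceq]
        field_simp [ht0]
        try ring
  set b := f (F ξ) with hb
  have hξnorm : ‖F ξ‖ ≤ 2 * r := by
    have h1 := hstay ξ hξmem
    have h2 : F ξ = (F ξ - F 0) + F 0 := by abel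
    calc ‖F ξ‖ = ‖(F ξ - F 0) + F 0‖ := by rw [← h2]
      _ ≤ ‖F ξ - F 0‖ + ‖F 0‖ := norm_add_le _ _
      _ ≤ M * |t| + N := by
          refine add_le_add h1 ?_
          rw [hF0]
      _ ≤ r + r := add_le_add hMtr.le hNr.le
      _ = 2 * r := by ring
  have hξdist : dist (F ξ) ((0, 0) : ℝ × ℝ) ≤ 2 * r := by
    have h0 : ((0, 0) : ℝ × ℝ) = 0 := rfl
    rw [h0, dist_zero_right]; exact hξnorm
  have hba : |b - a| ≤ |a| / 2 := by
    have h1 : dist (F ξ) ((0, 0) : ℝ × ℝ) < r2 := lt_of_le_of_lt hξdist h2r2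
    have h2 := hball2 h1
    rw [Real.dist_eq] at h2
    exact h2.le
  have hbabs : |a| / 2 ≤ |b| := by
    have h1 : |a| - |b| ≤ |a - b| := abs_sub_abs_le_abs_sub a b
    rw [abs_sub_comm] at h1
    linarith
  have hbne : b ≠ 0 := by
    intro h; rw [h] at hbabs; simp at hbabs; linarith
  have htb : |t| * |a| ≤ 4 * N := by
    have h1 : |b| * |t| = 2 * |x| := by
      rw [← abs_mul, hξ, abs_mul]
      norm_num
    nlinarith [abs_nonneg t, abs_nonneg x]
  -- Lipschitz bound
  have hLb : |b - a| ≤ (L : ℝ) * (M * |t| + N) := by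
    have h1 : F ξ ∈ t₀ := hball1 (by
      rw [Metric.mem_ball]; exact lt_of_le_of_lt hξdist h2r1)
    have h2 : ((0, 0) : ℝ × ℝ) ∈ t₀ := mem_of_mem_nhds ht₀
    have h3 := hLip.dist_le_mul _ h1 _ h2
    rw [Real.dist_eq] at h3
    have h4 : dist (F ξ) ((0, 0) : ℝ × ℝ) ≤ M * |t| + N := by
      have h0 : ((0, 0) : ℝ × ℝ) = 0 := rfl
      rw [h0, dist_zero_right]
      have h5 := hstay ξ hξmem
      have h6 : F ξ = (F ξ - F 0) + F 0 := by abel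
      calc ‖F ξ‖ = ‖(F ξ - F 0) + F 0‖ := by rw [← h6]
        _ ≤ ‖F ξ - F 0‖ + ‖F 0‖ := norm_add_le _ _
        _ ≤ M * |t| + N := by
            refine add_le_add h5 ?_
            rw [hF0]
    calc |b - a| ≤ (L : ℝ) * dist (F ξ) ((0, 0) : ℝ × ℝ) := h3
      _ ≤ (L : ℝ) * (M * |t| + N) := by
          exact mul_le_mul_of_nonneg_left h4 (L.coe_nonneg)
  -- main estimate
  have heq2 : t + 2 * x / a = t * (a - b) / a := by
    field_simp
    linarith [hξ]
  have hfinal : |t + 2 * x / a| ≤ C1 * N ^ 2 := by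
    have e1 : |t + 2 * x / a| = |t| * |a - b| / |a| := by
      rw [heq2, abs_div, abs_mul]
    rw [e1, hC1, div_mul_eq_mul_div, div_le_div_iff₀ hA (by positivity : (0:ℝ) < |a| ^ 3)]
    have hab : |a - b| = |b - a| := abs_sub_comm a b
    have hLnn : (0:ℝ) ≤ L := L.coe_nonneg
    have hD : |b - a| * |a| ≤ (L:ℝ) * M * (4 * N) + (L:ℝ) * N * |a| := by
      have s1 : |b - a| * |a| ≤ (L:ℝ) * (M * |t| + N) * |a| :=
        mul_le_mul_of_nonneg_right hLb (abs_nonneg a)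
      have s2 : (L:ℝ) * (M * |t| + N) * |a| = (L:ℝ) * M * (|t| * |a|) + (L:ℝ) * N * |a| := by
        ring
      have s3 : (L:ℝ) * M * (|t| * |a|) ≤ (L:ℝ) * M * (4 * N) :=
        mul_le_mul_of_nonneg_left htb (mul_nonneg hLnn hM)
      linarith
    have key : |t| * |b - a| * |a| ^ 2 ≤ 4 * (L:ℝ) * (4 * M + |a|) * N ^ 2 := by
      have s4 : |t| * |b - a| * |a| ^ 2 = (|t| * |a|) * (|b - a| * |a|) := by ring
      have s5 : (|t| * |a|) * (|b - a| * |a|) ≤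
          (4 * N) * ((L:ℝ) * M * (4 * N) + (L:ℝ) * N * |a|) := by
        apply mul_le_mul htb hD (mul_nonneg (abs_nonneg (b - a)) (abs_nonneg a))
        linarith
      have s6 : (4 * N) * ((L:ℝ) * M * (4 * N) + (L:ℝ) * N * |a|) =
          4 * (L:ℝ) * (4 * M + |a|) * N ^ 2 := by ring
      linarith
    calc |t| * |a - b| * |a| ^ 3 = (|t| * |b - a| * |a| ^ 2) * |a| := by rw [hab]; ring
      _ ≤ (4 * (L:ℝ) * (4 * M + |a|) * N ^ 2) * |a| :=
          mul_le_mul_of_nonneg_right key (abs_nonneg a)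
  -- second bound
  have hthird : |Y t x y - y| ≤ (4 * M / |a|) * N := by
    have h1 := hstay t (Set.right_mem_uIcc)
    have h2 : (F t - F 0).2 = Y t x y - y := by simp [hFdef, hF0, hpdef, hY0]
    have h3 : |Y t x y - y| ≤ ‖F t - F 0‖ := by
      rw [← h2]
      have := norm_snd_le (F t - F 0)
      simpa [Real.norm_eq_abs] using this
    have h4 : M * |t| ≤ 4 * M / |a| * N := by
      rw [div_mul_eq_mul_div, le_div_iff₀ hA]
      nlinarith [mul_le_mul_of_nonneg_left htb hM]
    linarith
  -- positivity
  have habpos : 0 < a * b := by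
    have h1 := abs_le.mp hba
    rcases lt_or_gt_of_ne hf0 with h | h
    · have h2 : |a| = -a := abs_of_neg h
      nlinarith
    · have h2 : |a| = a := abs_of_pos h
      nlinarith
  have hbx : b * x < 0 := by
    nlinarith [mul_neg_of_pos_of_neg habpos hsign, sq_nonneg a]
  have hpos : 0 < t := by
    have hb2 : 0 < b ^ 2 := by positivity
    have e : b ^ 2 * t = -2 * (b * x) := by linear_combination b * hξ
    nlinarith [e, hbx, hb2]
  have h9 : 0 ≤ 4 * M / |a| := div_nonneg (by linarith) (abs_nonneg a)
  refine ⟨hpos, ?_, ?_⟩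
  · calc |t + 2 * x / a| ≤ C1 * N ^ 2 := hfinal
      _ ≤ (C1 + 4 * M / |a| + 1) * N ^ 2 := by nlinarith [sq_nonneg N]
  · calc |Y t x y - y| ≤ 4 * M / |a| * N := hthird
      _ ≤ (C1 + 4 * M / |a| + 1) * N := by nlinarith

set_option maxHeartbeats 1000000 in
theorem period_asymptotics
    (fp gp fm gm : ℝ × ℝ → ℝ)
    (hfp : ContDiff ℝ 4 fp) (hgp : ContDiff ℝ 4 gp)
    (hfm : ContDiff ℝ 4 fm) (hgm : ContDiff ℝ 4 gm)
    (hfm0 : fm (0, 0) > 0) (hfp0 : fp (0, 0) < 0)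
    (heq : fp (0, 0) * gm (0, 0) - fm (0, 0) * gp (0, 0) = 0)
    (Xp Yp Xm Ym : ℝ → ℝ → ℝ → ℝ)
    (hXp0 : ∀ x y, Xp 0 x y = x) (hYp0 : ∀ x y, Yp 0 x y = y)
    (hXm0 : ∀ x y, Xm 0 x y = x) (hYm0 : ∀ x y, Ym 0 x y = y)
    (hXpflow : ∀ t x y, HasDerivAt (fun s => Xp s x y) (fp (Xp t x y, Yp t x y)) t)
    (hYpflow : ∀ t x y, HasDerivAt (fun s => Yp s x y) (gp (Xp t x y, Yp t x y)) t)
    (hXmflow : ∀ t x y, HasDerivAt (fun s => Xm s x y) (fm (Xm t x y, Ym t x y)) t)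
    (hYmflow : ∀ t x y, HasDerivAt (fun s => Ym s x y) (gm (Xm t x y, Ym t x y)) t)
    (Tp Tm : ℝ × ℝ → ℝ) (hTp0 : Tp (0, 0) = 0) (hTm0 : Tm (0, 0) = 0)
    (hTp : ∃ U ∈ nhds ((0, 0) : ℝ × ℝ),
      ContDiffOn ℝ 3 Tp U ∧ ∀ p ∈ U, Xp (Tp p) p.1 p.2 = -p.1)
    (hTm : ∃ U ∈ nhds ((0, 0) : ℝ × ℝ),
      ContDiffOn ℝ 3 Tm U ∧ ∀ p ∈ U, Xm (Tm p) p.1 p.2 = -p.1)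
    (Pp Pm : ℝ → ℝ → ℝ)
    (hPp : ∀ x y, Pp x y = Yp (Tp (x, y)) x y)
    (hPm : ∀ x y, Pm x y = Ym (Tm (x, y)) x y)
    (ε0 : ℝ) (hε0 : ε0 > 0) (yfix : ℝ → ℝ)
    (hfix : ∀ x ∈ Set.Ioo 0 ε0, Pm (-x) (Pp x (yfix x)) = yfix x)
    (hfixO : ∃ C : ℝ, ∀ x ∈ Set.Ioo 0 ε0, |yfix x| ≤ C * x) :
    ∃ C > 0, ∃ ε > 0, ∀ x ∈ Set.Ioo 0 ε,
      0 < Tp (x, yfix x) ∧ 0 < Tm (-x, Pp x (yfix x)) ∧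
      |Tp (x, yfix x) + Tm (-x, Pp x (yfix x))
        - (-2 / fp (0, 0) + 2 / fm (0, 0)) * x| ≤ C * x ^ 2 := by
  obtain ⟨Cp, hCp, δp, hδp, Hp⟩ := crossing_est fp gp hfp hgp (ne_of_lt hfp0)
    Xp Yp hXp0 hYp0 hXpflow hYpflow Tp hTp0 hTp
  obtain ⟨Cm, hCm, δm, hδm, Hm⟩ := crossing_est fm gm hfm hgm (ne_of_gt hfm0)
    Xm Ym hXm0 hYm0 hXmflow hYmflow Tm hTm0 hTm
  obtain ⟨Cy, hCy⟩ := hfixO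
  have hCy0 : 0 ≤ Cy := by
    have h1 := hCy (ε0 / 2) ⟨by linarith, by linarith⟩
    nlinarith [abs_nonneg (yfix (ε0 / 2))]
  set K1 : ℝ := max 1 Cy with hK1
  have hK1pos : 0 < K1 := lt_of_lt_of_le zero_lt_one (le_max_left _ _)
  have hK1one : 1 ≤ K1 := le_max_left _ _
  have hK1Cy : Cy ≤ K1 := le_max_right _ _
  set K2 : ℝ := Cy + Cp * K1 with hK2
  have hK2nn : 0 ≤ K2 := by nlinarith
  set Km : ℝ := max 1 K2 with hKm
  have hKmpos : 0 < Km := lt_of_lt_of_le zero_lt_one (le_max_left _ _)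
  have hKmone : 1 ≤ Km := le_max_left _ _
  have hKmK2 : K2 ≤ Km := le_max_right _ _
  refine ⟨Cp * K1 ^ 2 + Cm * Km ^ 2 + 1, by positivity,
    min (min ε0 (δp / K1)) (δm / Km), by positivity, ?_⟩
  intro x hx
  have hx0 : 0 < x := hx.1
  have hxε0 : x < ε0 := lt_of_lt_of_le hx.2 ((min_le_left _ _).trans (min_le_left _ _))
  have hxδp : x < δp / K1 := lt_of_lt_of_le hx.2 ((min_le_left _ _).trans (min_le_right _ _))
  have hxδm : x < δm / Km := lt_of_lt_of_le hx.2 (min_le_right _ _)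
  have hyb : |yfix x| ≤ Cy * x := hCy x ⟨hx0, hxε0⟩
  set y := yfix x with hy
  have hNp : ‖((x, y) : ℝ × ℝ)‖ ≤ K1 * x := by
    rw [Prod.norm_def]
    simp only [Real.norm_eq_abs]
    apply max_le
    · rw [abs_of_pos hx0]; nlinarith
    · calc |y| ≤ Cy * x := hyb
        _ ≤ K1 * x := by nlinarith
  have hNplt : ‖((x, y) : ℝ × ℝ)‖ < δp := by
    have h1 : K1 * x < δp := by
      have := (lt_div_iff₀ hK1pos).mp hxδp; linarith [this]
    linarith
  have hsignp : fp (0, 0) * x < 0 := mul_neg_of_neg_of_pos hfp0 hx0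
  obtain ⟨hTppos, hTpbound, hYpbound⟩ := Hp x y hNplt hsignp
  have hPpval : Pp x y = Yp (Tp (x, y)) x y := hPp x y
  have hPb : |Pp x y| ≤ K2 * x := by
    have h1 : |Pp x y - y| ≤ Cp * ‖((x, y) : ℝ × ℝ)‖ := by rw [hPpval]; exact hYpbound
    have h2 : Cp * ‖((x, y) : ℝ × ℝ)‖ ≤ Cp * (K1 * x) :=
      mul_le_mul_of_nonneg_left hNp hCp.le
    calc |Pp x y| = |(Pp x y - y) + y| := by ring_nf
      _ ≤ |Pp x y - y| + |y| := abs_add_le _ _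
      _ ≤ Cp * (K1 * x) + Cy * x := by linarith
      _ = K2 * x := by rw [hK2]; ring
  set z := Pp x y with hz
  have hNm : ‖((-x, z) : ℝ × ℝ)‖ ≤ Km * x := by
    rw [Prod.norm_def]
    simp only [Real.norm_eq_abs]
    apply max_le
    · rw [abs_neg, abs_of_pos hx0]; nlinarith
    · calc |z| ≤ K2 * x := hPb
        _ ≤ Km * x := by nlinarith
  have hNmlt : ‖((-x, z) : ℝ × ℝ)‖ < δm := by
    have h1 : Km * x < δm := by
      have := (lt_div_iff₀ hKmpos).mp hxδm; linarith [this]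
    linarith
  have hsignm : fm (0, 0) * (-x) < 0 := by nlinarith
  obtain ⟨hTmpos, hTmbound, _⟩ := Hm (-x) z hNmlt hsignm
  refine ⟨hTppos, hTmpos, ?_⟩
  have e : Tp (x, y) + Tm (-x, z) - (-2 / fp (0, 0) + 2 / fm (0, 0)) * x
      = (Tp (x, y) + 2 * x / fp (0, 0)) + (Tm (-x, z) + 2 * (-x) / fm (0, 0)) := by
    ring
  rw [e]
  have hb1 : |Tp (x, y) + 2 * x / fp (0, 0)| ≤ Cp * (K1 * x) ^ 2 := by
    refine hTpbound.trans ?_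
    have : ‖((x, y) : ℝ × ℝ)‖ ^ 2 ≤ (K1 * x) ^ 2 := by
      apply pow_le_pow_left₀ (norm_nonneg _) hNp
    nlinarith
  have hb2 : |Tm (-x, z) + 2 * (-x) / fm (0, 0)| ≤ Cm * (Km * x) ^ 2 := by
    refine hTmbound.trans ?_
    have : ‖((-x, z) : ℝ × ℝ)‖ ^ 2 ≤ (Km * x) ^ 2 := by
      apply pow_le_pow_left₀ (norm_nonneg _) hNm
    nlinarith
  calc |(Tp (x, y) + 2 * x / fp (0, 0)) + (Tm (-x, z) + 2 * (-x) / fm (0, 0))|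
      ≤ |Tp (x, y) + 2 * x / fp (0, 0)| + |Tm (-x, z) + 2 * (-x) / fm (0, 0)| := abs_add_le _ _
    _ ≤ Cp * (K1 * x) ^ 2 + Cm * (Km * x) ^ 2 := by linarith
    _ ≤ (Cp * K1 ^ 2 + Cm * Km ^ 2 + 1) * x ^ 2 := by nlinarith [sq_nonneg x]
end
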